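/- arXiv:2008.07991 — 8 statements merged into one kernel-verified Lean document; each statement's English description precedes it below -/
import Mathlib

section
/- For any field k, the projective linear group PGL_2(k) is generated by involutions. -/
open scoped MatrixGroups

/-- The projective general linear group `PGL n k = GL n k / center`. -/
abbrev PGL (n : ℕ) (k : Type*) [Field k] :=
  GL (Fin n) k ⧸ Subgroup.center (GL (Fin n) k)

section aux

variable {k : Type*} [Field k]

open Matrix

/-- An element of `GL 2 k` whose matrix has trace zero maps to an involution in `PGL 2 k`. -/
lemma sq_mk_eq_one_of_trace_eq_zero (M : GL (Fin 2) k)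
    (h : Matrix.trace (M : Matrix (Fin 2) (Fin 2) k) = 0) :
    (QuotientGroup.mk M : PGL 2 k) ^ 2 = 1 := by
  have hM : (QuotientGroup.mk M : PGL 2 k) ^ 2 = QuotientGroup.mk (M ^ 2) := rfl
  rw [hM, QuotientGroup.eq_one_iff]
  rw [Matrix.trace_fin_two] at h
  have hd : (M : Matrix (Fin 2) (Fin 2) k) 1 1 = -(M : Matrix (Fin 2) (Fin 2) k) 0 0 := by
    linear_combination h
  set A : Matrix (Fin 2) (Fin 2) k := (M : Matrix (Fin 2) (Fin 2) k) with hA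
  have key : A * A = (A 0 0 * A 0 0 + A 0 1 * A 1 0) • (1 : Matrix (Fin 2) (Fin 2) k) := by
    ext i j
    fin_cases i <;> fin_cases j <;>
      simp [Matrix.mul_apply, Fin.sum_univ_two, Matrix.one_apply, hd] <;> ring
  rw [Subgroup.mem_center_iff]
  intro g
  ext : 1
  simp only [Units.val_mul, Units.val_pow_eq_pow_val, pow_two]
  rw [← hA, key, Matrix.mul_smul, Matrix.smul_mul, Matrix.mul_one, Matrix.one_mul]

lemma neg_one_ne_zero' : (-1 : k) ≠ 0 := neg_ne_zero.mpr one_ne_zero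

end aux

/-- For any field `k`, the projective linear group `PGL 2 k` is generated by involutions
(elements of order at most 2). -/
theorem stmt0 (k : Type*) [Field k] :
    Subgroup.closure {x : PGL 2 k | x ^ 2 = 1} = ⊤ := by
  rw [eq_top_iff]
  intro x _
  induction x using QuotientGroup.induction_on with
  | H A =>
  -- find S with trace S = 0, det S ≠ 0, trace (S * A) = 0
  set a := (A : Matrix (Fin 2) (Fin 2) k) 0 0 with ha
  set b := (A : Matrix (Fin 2) (Fin 2) k) 0 1 with hb
  set c := (A : Matrix (Fin 2) (Fin 2) k) 1 0 with hc
  obtain ⟨S, hStr, hSAtr⟩ : ∃ S : Matrix (Fin 2) (Fin 2) k,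
      (Matrix.trace S = 0 ∧ S.det ≠ 0) ∧
      Matrix.trace (S * (A : Matrix (Fin 2) (Fin 2) k)) = 0 := by
    rcases eq_or_ne c 0 with hc0 | hc0
    · rcases eq_or_ne b 0 with hb0 | hb0
      · refine ⟨!![0, 1; 1, 0], ⟨by simp [Matrix.trace_fin_two], by simp [Matrix.det_fin_two]⟩, ?_⟩
        simp only [Matrix.trace_fin_two, Matrix.mul_apply, Fin.sum_univ_two]
        simp [← hb, ← hc, hb0, hc0]
      · refine ⟨!![1, 0; -(a - (A : Matrix (Fin 2) (Fin 2) k) 1 1)/b, -1],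
          ⟨by simp [Matrix.trace_fin_two], by simp [Matrix.det_fin_two]⟩, ?_⟩
        simp only [Matrix.trace_fin_two, Matrix.mul_apply, Fin.sum_univ_two]
        simp only [Matrix.cons_val', Matrix.cons_val_zero, Matrix.cons_val_one, Matrix.head_cons,
          Matrix.empty_val', Matrix.cons_val_fin_one, Matrix.head_fin_const, Matrix.of_apply, ← ha, ← hb]
        field_simp
        ring
    · refine ⟨!![1, -(a - (A : Matrix (Fin 2) (Fin 2) k) 1 1)/c; 0, -1],
        ⟨by simp [Matrix.trace_fin_two], by simp [Matrix.det_fin_two]⟩, ?_⟩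
      simp only [Matrix.trace_fin_two, Matrix.mul_apply, Fin.sum_univ_two]
      simp only [Matrix.cons_val', Matrix.cons_val_zero, Matrix.cons_val_one, Matrix.head_cons,
        Matrix.empty_val', Matrix.cons_val_fin_one, Matrix.head_fin_const, Matrix.of_apply, ← ha, ← hc]
      field_simp
      try ring
  obtain ⟨hStr0, hSdet⟩ := hStr
  set Su : GL (Fin 2) k := Matrix.GeneralLinearGroup.mkOfDetNeZero S hSdet with hSu
  have hSuval : (Su : Matrix (Fin 2) (Fin 2) k) = S := rfl
  have h1 : (QuotientGroup.mk Su : PGL 2 k) ∈ Subgroup.closure {x : PGL 2 k | x ^ 2 = 1} :=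
    Subgroup.subset_closure (sq_mk_eq_one_of_trace_eq_zero Su (by rw [hSuval]; exact hStr0))
  have h2 : (QuotientGroup.mk (Su * A) : PGL 2 k) ∈ Subgroup.closure {x : PGL 2 k | x ^ 2 = 1} :=
    Subgroup.subset_closure (sq_mk_eq_one_of_trace_eq_zero (Su * A) (by
      show Matrix.trace ((Su : Matrix (Fin 2) (Fin 2) k) * (A : Matrix (Fin 2) (Fin 2) k)) = 0
      rw [hSuval]; exact hSAtr))
  have : (QuotientGroup.mk A : PGL 2 k) = (QuotientGroup.mk Su)⁻¹ * QuotientGroup.mk (Su * A) := by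
    rw [← QuotientGroup.mk_inv, ← QuotientGroup.mk_mul, inv_mul_cancel_left]
  rw [this]
  exact mul_mem (inv_mem h1) h2
end

section
/- For a field k, the projective linear group PGL_3(k) is generated by involutions if and only if every element of k is a cube. -/
open scoped MatrixGroups

namespace PGLAux
open Matrix
variable {k : Type*} [Field k]

lemma diag_conj_std {n : Type*} [Fintype n] [DecidableEq n] (d : n → k) (i j : n) (c : k) :
    diagonal d * single i j c * diagonal d = single i j (d i * c * d j) := by
  ext a b
  rw [Matrix.mul_diagonal, Matrix.diagonal_mul]
  by_cases ha : i = a <;> by_cases hb : j = b <;> simp [Matrix.single, ha, hb]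

/-- the preimage in `GL` of the subgroup generated by involutions of `PGL 3 k` -/
noncomputable def K (k : Type*) [Field k] : Subgroup (GL (Fin 3) k) :=
  (Subgroup.closure {x : PGL 3 k | x ^ 2 = 1}).comap
    (QuotientGroup.mk' (Subgroup.center (GL (Fin 3) k)))

lemma mem_K_of_sq {A : GL (Fin 3) k}
    (h : (A : Matrix (Fin 3) (Fin 3) k) * A = 1) : A ∈ K k := by
  have hA2 : A * A = 1 := Units.ext (by simpa using h)
  refine Subgroup.subset_closure ?_
  show (QuotientGroup.mk' _ A) ^ 2 = 1
  rw [← map_pow, sq, hA2, _root_.map_one]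

lemma mem_K_of_eq_mul {u : GL (Fin 3) k} {A B : Matrix (Fin 3) (Fin 3) k}
    (hA : A * A = 1) (hB : B * B = 1)
    (h : (u : Matrix (Fin 3) (Fin 3) k) = A * B) : u ∈ K k := by
  have : u = (⟨A, A, hA, hA⟩ : GL (Fin 3) k) * ⟨B, B, hB, hB⟩ := Units.ext h
  rw [this]
  exact mul_mem (mem_K_of_sq hA) (mem_K_of_sq hB)

lemma scalar_mem_center {c : k} {u : GL (Fin 3) k}
    (h : (u : Matrix (Fin 3) (Fin 3) k) = c • 1) :
    u ∈ Subgroup.center (GL (Fin 3) k) := by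
  refine Subgroup.mem_center_iff.2 fun g => Units.ext ?_
  show (g : Matrix (Fin 3) (Fin 3) k) * u = (u : Matrix (Fin 3) (Fin 3) k) * g
  rw [h, Matrix.mul_smul, Matrix.smul_mul, Matrix.mul_one, Matrix.one_mul]

lemma pgl_eq_of_smul {c : k} {A B : GL (Fin 3) k}
    (h : (A : Matrix (Fin 3) (Fin 3) k) = c • (B : Matrix (Fin 3) (Fin 3) k)) :
    (QuotientGroup.mk' (Subgroup.center (GL (Fin 3) k)) A) = QuotientGroup.mk' _ B := by
  have hc : A * B⁻¹ ∈ Subgroup.center (GL (Fin 3) k) := by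
    refine scalar_mem_center (c := c) ?_
    show (A : Matrix (Fin 3) (Fin 3) k) * (B⁻¹ : GL (Fin 3) k) = c • 1
    rw [h, Matrix.smul_mul]
    congr 1
    exact B.mul_inv
  have : QuotientGroup.mk' (Subgroup.center (GL (Fin 3) k)) (A * B⁻¹) = 1 :=
    (QuotientGroup.eq_one_iff _).2 hc
  calc QuotientGroup.mk' (Subgroup.center (GL (Fin 3) k)) A
      = QuotientGroup.mk' _ (A * B⁻¹ * B) := by group
    _ = QuotientGroup.mk' _ B := by rw [_root_.map_mul, this, one_mul]


lemma mem_K_congr {u v : GL (Fin 3) k}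
    (h : QuotientGroup.mk' (Subgroup.center (GL (Fin 3) k)) u = QuotientGroup.mk' _ v)
    (hv : v ∈ K k) : u ∈ K k := by
  rw [K, Subgroup.mem_comap] at hv ⊢
  rw [h]; exact hv

lemma trans_mem (t : TransvectionStruct (Fin 3) k) {u : GL (Fin 3) k}
    (h : (u : Matrix (Fin 3) (Fin 3) k) = t.toMatrix) : u ∈ K k := by
  obtain ⟨i, j, hij, c⟩ := t
  set d : Fin 3 → k := fun x => if x = i then (-1 : k) else 1 with hd
  have h1 : ∀ x, d x * d x = 1 := fun x => by by_cases hx : x = i <;> simp [hd, hx]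
  have hdd : diagonal d * diagonal d = 1 := by
    rw [diagonal_mul_diagonal]
    convert Matrix.diagonal_one
    exact h1 _
  have htm : (⟨i, j, hij, c⟩ : TransvectionStruct (Fin 3) k).toMatrix = transvection i j c :=
    rfl
  have hDTD : diagonal d * transvection i j c * diagonal d = transvection i j (-c) := by
    rw [transvection, Matrix.mul_add, Matrix.add_mul, Matrix.mul_one, hdd, diag_conj_std, transvection]
    congr 1
    have : d i * c * d j = -c := by simp [hd, hij.symm]
    rw [this]
  have hm : (diagonal d * transvection i j c) * (diagonal d * transvection i j c) = 1 := by
    have : (diagonal d * transvection i j c) * (diagonal d * transvection i j c)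
        = (diagonal d * transvection i j c * diagonal d) * transvection i j c := by
      simp only [Matrix.mul_assoc]
    rw [this, hDTD, transvection_mul_transvection_same _ _ hij, neg_add_cancel,
      transvection_zero]
  refine mem_K_of_eq_mul hdd hm ?_
  rw [h, htm, ← Matrix.mul_assoc, hdd, Matrix.one_mul]

lemma diag3_eq (a b c : k) : diagonal ![a, b, c] = !![a, 0, 0; 0, b, 0; 0, 0, c] := by
  ext i j
  fin_cases i <;> fin_cases j <;> simp [Matrix.diagonal_apply] <;> rfl

lemma swap01_mem {t : k} (ht : t ≠ 0) {u : GL (Fin 3) k}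
    (h : (u : Matrix (Fin 3) (Fin 3) k) = diagonal ![t, t⁻¹, 1]) : u ∈ K k := by
  refine mem_K_of_eq_mul (A := !![0,t,0; t⁻¹,0,0; 0,0,1]) (B := !![0,1,0; 1,0,0; 0,0,1])
    ?_ ?_ ?_
  · rw [Matrix.mul_fin_three, Matrix.one_fin_three]
    norm_num [mul_inv_cancel₀ ht, inv_mul_cancel₀ ht]
  · rw [Matrix.mul_fin_three, Matrix.one_fin_three]
    norm_num
  · rw [h, Matrix.mul_fin_three, diag3_eq]
    norm_num

lemma swap02_mem {t : k} (ht : t ≠ 0) {u : GL (Fin 3) k}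
    (h : (u : Matrix (Fin 3) (Fin 3) k) = diagonal ![t, 1, t⁻¹]) : u ∈ K k := by
  refine mem_K_of_eq_mul (A := !![0,0,t; 0,1,0; t⁻¹,0,0]) (B := !![0,0,1; 0,1,0; 1,0,0])
    ?_ ?_ ?_
  · rw [Matrix.mul_fin_three, Matrix.one_fin_three]
    norm_num [mul_inv_cancel₀ ht, inv_mul_cancel₀ ht]
  · rw [Matrix.mul_fin_three, Matrix.one_fin_three]
    norm_num
  · rw [h, Matrix.mul_fin_three, diag3_eq]
    norm_num

lemma swap12_mem {t : k} (ht : t ≠ 0) {u : GL (Fin 3) k}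
    (h : (u : Matrix (Fin 3) (Fin 3) k) = diagonal ![1, t, t⁻¹]) : u ∈ K k := by
  refine mem_K_of_eq_mul (A := !![1,0,0; 0,0,t; 0,t⁻¹,0]) (B := !![1,0,0; 0,0,1; 0,1,0])
    ?_ ?_ ?_
  · rw [Matrix.mul_fin_three, Matrix.one_fin_three]
    norm_num [mul_inv_cancel₀ ht, inv_mul_cancel₀ ht]
  · rw [Matrix.mul_fin_three, Matrix.one_fin_three]
    norm_num
  · rw [h, Matrix.mul_fin_three, diag3_eq]
    norm_num

/-- a diagonal matrix with nonzero entries, as a unit -/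
def diagUnit (d : Fin 3 → k) (hd : ∀ i, d i ≠ 0) : GL (Fin 3) k where
  val := diagonal d
  inv := diagonal fun i => (d i)⁻¹
  val_inv := by
    rw [diagonal_mul_diagonal]
    convert Matrix.diagonal_one
    exact mul_inv_cancel₀ (hd _)
  inv_val := by
    rw [diagonal_mul_diagonal]
    convert Matrix.diagonal_one
    exact inv_mul_cancel₀ (hd _)


lemma diagA_mem (hcube : ∀ a : k, ∃ x : k, x ^ 3 = a) {a : k} (ha : a ≠ 0)
    {u : GL (Fin 3) k} (h : (u : Matrix (Fin 3) (Fin 3) k) = diagonal ![a, 1, 1]) :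
    u ∈ K k := by
  obtain ⟨t, ht⟩ := hcube a
  have ht0 : t ≠ 0 := by rintro rfl; rw [← ht] at ha; simp at ha
  rw [← ht] at h
  have hd1 : ∀ i, (![t, t⁻¹, 1] : Fin 3 → k) i ≠ 0 := by
    intro i; fin_cases i
    · exact ht0
    · exact inv_ne_zero ht0
    · exact one_ne_zero
  have hd2 : ∀ i, (![t, 1, t⁻¹] : Fin 3 → k) i ≠ 0 := by
    intro i; fin_cases i
    · exact ht0
    · exact one_ne_zero
    · exact inv_ne_zero ht0
  refine mem_K_congr (v := diagUnit ![t, t⁻¹, 1] hd1 * diagUnit ![t, 1, t⁻¹] hd2)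
    (pgl_eq_of_smul (c := t) ?_) (mul_mem (swap01_mem ht0 rfl) (swap02_mem ht0 rfl))
  show (u : Matrix (Fin 3) (Fin 3) k)
      = t • ((diagUnit ![t, t⁻¹, 1] hd1 : Matrix (Fin 3) (Fin 3) k) * diagUnit ![t, 1, t⁻¹] hd2)
  have e1 : (diagUnit ![t, t⁻¹, 1] hd1 : Matrix (Fin 3) (Fin 3) k) = diagonal ![t, t⁻¹, 1] := rfl
  have e2 : (diagUnit ![t, 1, t⁻¹] hd2 : Matrix (Fin 3) (Fin 3) k) = diagonal ![t, 1, t⁻¹] := rfl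
  rw [h, e1, e2, diagonal_mul_diagonal]
  have he : (![t ^ 3, 1, 1] : Fin 3 → k)
      = t • fun i => (![t, t⁻¹, 1] : Fin 3 → k) i * (![t, 1, t⁻¹] : Fin 3 → k) i := by
    funext i
    fin_cases i
    · show t ^ 3 = t * (t * t); ring
    · show (1 : k) = t * (t⁻¹ * 1); field_simp
    · show (1 : k) = t * (1 * t⁻¹); field_simp
  rw [he, Matrix.diagonal_smul]

lemma diagC_mem (hcube : ∀ a : k, ∃ x : k, x ^ 3 = a) {a : k} (ha : a ≠ 0)
    {u : GL (Fin 3) k} (h : (u : Matrix (Fin 3) (Fin 3) k) = diagonal ![1, 1, a]) :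
    u ∈ K k := by
  obtain ⟨t, ht⟩ := hcube a
  have ht0 : t ≠ 0 := by rintro rfl; rw [← ht] at ha; simp at ha
  have ht0' : t⁻¹ ≠ 0 := inv_ne_zero ht0
  rw [← ht] at h
  have hd1 : ∀ i, (![t⁻¹, 1, t] : Fin 3 → k) i ≠ 0 := by
    intro i; fin_cases i
    · exact ht0'
    · exact one_ne_zero
    · exact ht0
  have hd2 : ∀ i, (![1, t⁻¹, t] : Fin 3 → k) i ≠ 0 := by
    intro i; fin_cases i
    · exact one_ne_zero
    · exact ht0'
    · exact ht0
  have m1 : diagUnit ![t⁻¹, 1, t] hd1 ∈ K k := by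
    refine swap02_mem ht0' ?_
    show diagonal ![t⁻¹, 1, t] = diagonal ![t⁻¹, 1, (t⁻¹)⁻¹]
    rw [inv_inv]
  have m2 : diagUnit ![1, t⁻¹, t] hd2 ∈ K k := by
    refine swap12_mem ht0' ?_
    show diagonal ![1, t⁻¹, t] = diagonal ![1, t⁻¹, (t⁻¹)⁻¹]
    rw [inv_inv]
  refine mem_K_congr (v := diagUnit ![t⁻¹, 1, t] hd1 * diagUnit ![1, t⁻¹, t] hd2)
    (pgl_eq_of_smul (c := t) ?_) (mul_mem m1 m2)
  show (u : Matrix (Fin 3) (Fin 3) k)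
      = t • ((diagUnit ![t⁻¹, 1, t] hd1 : Matrix (Fin 3) (Fin 3) k) * diagUnit ![1, t⁻¹, t] hd2)
  have e1 : (diagUnit ![t⁻¹, 1, t] hd1 : Matrix (Fin 3) (Fin 3) k) = diagonal ![t⁻¹, 1, t] := rfl
  have e2 : (diagUnit ![1, t⁻¹, t] hd2 : Matrix (Fin 3) (Fin 3) k) = diagonal ![1, t⁻¹, t] := rfl
  rw [h, e1, e2, diagonal_mul_diagonal]
  have he : (![1, 1, t ^ 3] : Fin 3 → k)
      = t • fun i => (![t⁻¹, 1, t] : Fin 3 → k) i * (![1, t⁻¹, t] : Fin 3 → k) i := by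
    funext i
    fin_cases i
    · show (1 : k) = t * (t⁻¹ * 1); field_simp
    · show (1 : k) = t * (1 * t⁻¹); field_simp
    · show t ^ 3 = t * (t * t); ring
  rw [he, Matrix.diagonal_smul]

lemma diag_mem (hcube : ∀ a : k, ∃ x : k, x ^ 3 = a) {d : Fin 3 → k} (hd : ∀ i, d i ≠ 0)
    {u : GL (Fin 3) k} (h : (u : Matrix (Fin 3) (Fin 3) k) = diagonal d) : u ∈ K k := by
  have hr0 : d 0 * (d 1)⁻¹ ≠ 0 := mul_ne_zero (hd 0) (inv_ne_zero (hd 1))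
  have hs0 : d 2 * (d 1)⁻¹ ≠ 0 := mul_ne_zero (hd 2) (inv_ne_zero (hd 1))
  have hd1 : ∀ i, (![d 0 * (d 1)⁻¹, 1, 1] : Fin 3 → k) i ≠ 0 := by
    intro i; fin_cases i
    · exact hr0
    · exact one_ne_zero
    · exact one_ne_zero
  have hd2 : ∀ i, (![1, 1, d 2 * (d 1)⁻¹] : Fin 3 → k) i ≠ 0 := by
    intro i; fin_cases i
    · exact one_ne_zero
    · exact one_ne_zero
    · exact hs0
  refine mem_K_congr
    (v := diagUnit ![d 0 * (d 1)⁻¹, 1, 1] hd1 * diagUnit ![1, 1, d 2 * (d 1)⁻¹] hd2)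
    (pgl_eq_of_smul (c := d 1) ?_)
    (mul_mem (diagA_mem hcube hr0 rfl) (diagC_mem hcube hs0 rfl))
  show (u : Matrix (Fin 3) (Fin 3) k)
      = d 1 • ((diagUnit ![d 0 * (d 1)⁻¹, 1, 1] hd1 : Matrix (Fin 3) (Fin 3) k)
          * diagUnit ![1, 1, d 2 * (d 1)⁻¹] hd2)
  have e1 : (diagUnit ![d 0 * (d 1)⁻¹, 1, 1] hd1 : Matrix (Fin 3) (Fin 3) k)
      = diagonal ![d 0 * (d 1)⁻¹, 1, 1] := rfl
  have e2 : (diagUnit ![1, 1, d 2 * (d 1)⁻¹] hd2 : Matrix (Fin 3) (Fin 3) k)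
      = diagonal ![1, 1, d 2 * (d 1)⁻¹] := rfl
  rw [h, e1, e2, diagonal_mul_diagonal]
  have he : d = d 1 • fun i =>
      (![d 0 * (d 1)⁻¹, 1, 1] : Fin 3 → k) i * (![1, 1, d 2 * (d 1)⁻¹] : Fin 3 → k) i := by
    funext i
    fin_cases i
    · show d 0 = d 1 * (d 0 * (d 1)⁻¹ * 1)
      field_simp [hd 1]
      try ring
    · show d 1 = d 1 * (1 * 1)
      ring
    · show d 2 = d 1 * (1 * (d 2 * (d 1)⁻¹))
      field_simp [hd 1]
      try ring
  conv_lhs => rw [he]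
  rw [Matrix.diagonal_smul]


/-- a transvection as a unit -/
def tUnit (t : TransvectionStruct (Fin 3) k) : GL (Fin 3) k :=
  ⟨t.toMatrix, t.inv.toMatrix, t.mul_inv, t.inv_mul⟩

lemma K_eq_top (hcube : ∀ a : k, ∃ x : k, x ^ 3 = a) : K k = ⊤ := by
  rw [Subgroup.eq_top_iff']
  intro M
  obtain ⟨L, L', D, hdiag⟩ :=
    Matrix.Pivot.exists_list_transvec_mul_mul_list_transvec_eq_diagonal (M : Matrix (Fin 3) (Fin 3) k)
  set UL : GL (Fin 3) k := (L.map tUnit).prod with hUL0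
  set UL' : GL (Fin 3) k := (L'.map tUnit).prod with hUL0'
  have hUL : (UL : Matrix (Fin 3) (Fin 3) k) = (L.map TransvectionStruct.toMatrix).prod := by
    have := map_list_prod (Units.coeHom (Matrix (Fin 3) (Fin 3) k)) (L.map tUnit)
    exact this.trans (by rw [List.map_map]; rfl)
  have hUL' : (UL' : Matrix (Fin 3) (Fin 3) k) = (L'.map TransvectionStruct.toMatrix).prod := by
    have := map_list_prod (Units.coeHom (Matrix (Fin 3) (Fin 3) k)) (L'.map tUnit)
    exact this.trans (by rw [List.map_map]; rfl)
  have hDval : ((UL * M * UL' : GL (Fin 3) k) : Matrix (Fin 3) (Fin 3) k) = diagonal D := by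
    rw [Units.val_mul, Units.val_mul, hUL, hUL']
    exact hdiag
  have hDne : ∀ i, D i ≠ 0 := by
    have hu : IsUnit (diagonal D) := hDval ▸ (UL * M * UL').isUnit
    rw [Matrix.isUnit_iff_isUnit_det, Matrix.det_diagonal] at hu
    intro i hi
    rw [Finset.prod_eq_zero (Finset.mem_univ i) hi] at hu
    exact hu.ne_zero rfl
  have hULK : UL ∈ K k := by
    refine Subgroup.list_prod_mem _ ?_
    intro x hx
    obtain ⟨t, -, rfl⟩ := List.mem_map.mp hx
    exact trans_mem t rfl
  have hULK' : UL' ∈ K k := by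
    refine Subgroup.list_prod_mem _ ?_
    intro x hx
    obtain ⟨t, -, rfl⟩ := List.mem_map.mp hx
    exact trans_mem t rfl
  have hDK : UL * M * UL' ∈ K k := diag_mem hcube hDne hDval
  have hM : M = UL⁻¹ * (UL * M * UL') * UL'⁻¹ := by group
  rw [hM]
  exact mul_mem (mul_mem (inv_mem hULK) hDK) (inv_mem hULK')

lemma closure_eq_top (hcube : ∀ a : k, ∃ x : k, x ^ 3 = a) :
    Subgroup.closure {x : PGL 3 k | x ^ 2 = 1} = ⊤ := by
  rw [Subgroup.eq_top_iff']
  intro x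
  obtain ⟨M, rfl⟩ := QuotientGroup.mk'_surjective (Subgroup.center (GL (Fin 3) k)) x
  have hM : M ∈ K k := by rw [K_eq_top hcube]; trivial
  exact Subgroup.mem_comap.mp hM

lemma cube_of_closure (hgen : Subgroup.closure {x : PGL 3 k | x ^ 2 = 1} = ⊤) (a : k) :
    ∃ x : k, x ^ 3 = a := by
  rcases eq_or_ne a 0 with rfl | ha
  · exact ⟨0, by norm_num⟩
  set cubes : Subgroup kˣ := (powMonoidHom 3 : kˣ →* kˣ).range with hcubes
  set φ0 : GL (Fin 3) k →* kˣ ⧸ cubes :=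
    (QuotientGroup.mk' cubes).comp Matrix.GeneralLinearGroup.det with hφ0
  have hker : Subgroup.center (GL (Fin 3) k) ≤ φ0.ker := by
    intro z hz
    have hc : ∀ t : TransvectionStruct (Fin 3) k,
        Commute t.toMatrix (z : Matrix (Fin 3) (Fin 3) k) := by
      intro t
      have h1 := Subgroup.mem_center_iff.mp hz (tUnit t)
      have h2 := congrArg Units.val h1
      exact h2
    obtain ⟨r, hr⟩ := Matrix.mem_range_scalar_of_commute_transvectionStruct hc
    have hz3 : (z : Matrix (Fin 3) (Fin 3) k) = r • 1 := by
      rw [← hr, Matrix.scalar_apply,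
        show (fun _ : Fin 3 => r) = r • (fun _ : Fin 3 => (1 : k)) from
          funext fun _ => (mul_one r).symm,
        Matrix.diagonal_smul, Matrix.diagonal_one]
    have hr0 : r ≠ 0 := by
      intro h0
      have hzz : (z : Matrix (Fin 3) (Fin 3) k) = 0 := by rw [hz3, h0, zero_smul]
      have h1 : (z : Matrix (Fin 3) (Fin 3) k) * ((z⁻¹ : GL (Fin 3) k) : Matrix (Fin 3) (Fin 3) k) = 1 := z.mul_inv
      rw [hzz, Matrix.zero_mul] at h1
      have := congrArg (fun m => m 0 0) h1
      simp at this
    have hdet : Matrix.GeneralLinearGroup.det z ∈ cubes := by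
      refine ⟨Units.mk0 r hr0, Units.ext ?_⟩
      show (Units.mk0 r hr0 : kˣ).val ^ 3 = ((z : Matrix (Fin 3) (Fin 3) k)).det
      rw [hz3, Matrix.det_smul, Matrix.det_one, mul_one]
      simp [Fintype.card_fin]
    show φ0 z = 1
    rw [hφ0, MonoidHom.comp_apply]
    exact (QuotientGroup.eq_one_iff _).mpr hdet
  set φ : PGL 3 k →* kˣ ⧸ cubes := QuotientGroup.lift _ φ0 hker with hφ
  have hcubeQ : ∀ q : kˣ ⧸ cubes, q ^ 3 = 1 := by
    intro q
    obtain ⟨u, rfl⟩ := QuotientGroup.mk'_surjective cubes q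
    rw [← map_pow]
    exact (QuotientGroup.eq_one_iff _).mpr ⟨u, rfl⟩
  have hsub : Subgroup.closure {x : PGL 3 k | x ^ 2 = 1} ≤ φ.ker := by
    rw [Subgroup.closure_le]
    intro x hx
    have h2 : φ x ^ 2 = 1 := by rw [← map_pow, hx, _root_.map_one]
    have h3 : φ x ^ 3 = 1 := hcubeQ _
    have : φ x = 1 := by
      calc φ x = φ x * φ x ^ 2 := by rw [h2]; exact (_root_.mul_one (φ x)).symm
        _ = φ x ^ 3 := (pow_succ' _ 2).symm
        _ = 1 := h3
    simpa [MonoidHom.mem_ker] using this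
  have hd1 : ∀ i, (![a, 1, 1] : Fin 3 → k) i ≠ 0 := by
    intro i; fin_cases i
    · exact ha
    · exact one_ne_zero
    · exact one_ne_zero
  set ua := diagUnit ![a, 1, 1] hd1 with hua
  have htriv : φ (QuotientGroup.mk' (Subgroup.center (GL (Fin 3) k)) ua) = 1 := by
    have : (QuotientGroup.mk' (Subgroup.center (GL (Fin 3) k)) ua) ∈ φ.ker :=
      hsub (hgen ▸ Subgroup.mem_top _)
    simpa [MonoidHom.mem_ker] using this
  have hφua : φ (QuotientGroup.mk' (Subgroup.center (GL (Fin 3) k)) ua) = φ0 ua := rfl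
  rw [hφua, hφ0, MonoidHom.comp_apply] at htriv
  obtain ⟨w, hw⟩ := (QuotientGroup.eq_one_iff _).mp htriv
  refine ⟨(w : k), ?_⟩
  have h2 := congrArg Units.val hw
  have h3 : ((Matrix.GeneralLinearGroup.det ua : kˣ) : k)
      = (diagonal ![a, 1, 1] : Matrix (Fin 3) (Fin 3) k).det := rfl
  rw [Matrix.det_diagonal, Fin.prod_univ_three] at h3
  simp only [powMonoidHom_apply, Units.val_pow_eq_pow_val] at h2
  rw [h2, h3]
  simp

end PGLAux

/-- For a field `k`, the projective linear group `PGL 3 k` is generated by involutions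
if and only if every element of `k` is a cube. -/
theorem stmt1 (k : Type*) [Field k] :
    Subgroup.closure {x : PGL 3 k | x ^ 2 = 1} = ⊤ ↔ ∀ a : k, ∃ x : k, x ^ 3 = a :=
  ⟨fun h a => PGLAux.cube_of_closure h a, fun h => PGLAux.closure_eq_top h⟩
end

section
/- The line {x = 0} is the unique line in P^2 over the algebraic closure of F_2 that is tangent to both the conic y^2 + xz = 0 and the conic x^2 + xy + z^2 = 0. -/
/-- The line `x = 0` is the unique line of `ℙ²` over the algebraic closure of `𝔽₂` that is
tangent to both conics `y² + xz = 0` and `x² + xy + z² = 0`.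

A line is encoded by two linearly independent vectors `u, v` of `K³` spanning it, and it is
tangent to a conic `q` if the binary quadratic form `(s,t) ↦ q(s•u + t•v)` is a square of a
linear form.  The conclusion says the line is `{x = 0}`, i.e. `u 0 = 0` and `v 0 = 0`. -/
theorem stmt6 (u v : Fin 3 → AlgebraicClosure (ZMod 2))
    (hli : LinearIndependent (AlgebraicClosure (ZMod 2)) ![u, v])
    (ht1 : ∃ a b : AlgebraicClosure (ZMod 2), ∀ s t : AlgebraicClosure (ZMod 2),
      (s * u 1 + t * v 1) ^ 2 + (s * u 0 + t * v 0) * (s * u 2 + t * v 2) =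
        (a * s + b * t) ^ 2)
    (ht2 : ∃ a b : AlgebraicClosure (ZMod 2), ∀ s t : AlgebraicClosure (ZMod 2),
      (s * u 0 + t * v 0) ^ 2 + (s * u 0 + t * v 0) * (s * u 1 + t * v 1) +
          (s * u 2 + t * v 2) ^ 2 = (a * s + b * t) ^ 2) :
    u 0 = 0 ∧ v 0 = 0 := by
  have htwo : (2 : AlgebraicClosure (ZMod 2)) = 0 := by
    have inst : CharP (AlgebraicClosure (ZMod 2)) 2 := inferInstance
    exact CharTwo.two_eq_zero
  obtain ⟨a, b, h1⟩ := ht1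
  obtain ⟨c, d, h2⟩ := ht2
  have cross1 : u 0 * v 2 + v 0 * u 2 = 0 := by
    linear_combination h1 1 1 - h1 1 0 - h1 0 1 + (a * b - u 1 * v 1) * htwo
  have cross2 : u 0 * v 1 + v 0 * u 1 = 0 := by
    linear_combination h2 1 1 - h2 1 0 - h2 0 1 +
      (c * d - u 0 * v 0 - u 2 * v 2) * htwo
  rw [linearIndependent_fin2] at hli
  obtain ⟨hv, ha⟩ := hli
  simp only [Matrix.cons_val_zero, Matrix.cons_val_one, Matrix.head_cons] at hv ha
  have hv0 : v 0 = 0 := by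
    by_contra h
    apply ha (u 0 / v 0)
    funext i
    fin_cases i
    · show (u 0 / v 0) * v 0 = u 0
      field_simp
    · show (u 0 / v 0) * v 1 = u 1
      field_simp
      linear_combination cross2 - u 1 * v 0 * htwo
    · show (u 0 / v 0) * v 2 = u 2
      field_simp
      linear_combination cross1 - u 2 * v 0 * htwo
  refine ⟨?_, hv0⟩
  by_contra h
  apply hv
  have e1 : v 1 = 0 := by
    have h' : u 0 * v 1 = 0 := by linear_combination cross2 + u 1 * hv0 - u 1 * v 0 * htwo
    rcases mul_eq_zero.mp h' with h'' | h'' <;> tauto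
  have e2 : v 2 = 0 := by
    have h' : u 0 * v 2 = 0 := by linear_combination cross1 + u 2 * hv0 - u 2 * v 0 * htwo
    rcases mul_eq_zero.mp h' with h'' | h'' <;> tauto
  funext i
  fin_cases i
  · exact hv0
  · exact e1
  · exact e2
end

section
/- The conic C in P^2 over the rational function field F_2(t) given by t(y^2+xz) + x^2 + xy + z^2 = 0 has no F_2(t)-rational points. -/
open Polynomial

private lemma two_eq_zero' : (2 : Polynomial (ZMod 2)) = 0 := by
  have h1 : (2 : Polynomial (ZMod 2)) = C 1 + C 1 := by rw [C_1]; ring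
  have h2 : (1 + 1 : ZMod 2) = 0 := rfl
  rw [h1, ← C_add, h2, C_0]

private lemma fin_case : ∀ p q r : ZMod 2,
    1 * (q ^ 2 + p * r) + (p ^ 2 + p * q + r ^ 2) = 0 → p = 0 ∧ q - r = 0 := by decide

private lemma deg_aux {P A : Polynomial (ZMod 2)} (h : P = (X - 1) * A) :
    A.natDegree ≤ P.natDegree ∧ (P ≠ 0 → A.natDegree < P.natDegree) := by
  rcases eq_or_ne A 0 with rfl | hA
  · simp [h]
  have hs : (X - 1 : Polynomial (ZMod 2)) ≠ 0 := by
    simpa using (X_sub_C_ne_zero (1 : ZMod 2))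
  have hdeg : P.natDegree = 1 + A.natDegree := by
    rw [h, natDegree_mul hs hA]
    have : (X - 1 : Polynomial (ZMod 2)) = X - C 1 := by simp
    rw [this, natDegree_X_sub_C]
  omega

private lemma key (n : ℕ) : ∀ P Q R : Polynomial (ZMod 2),
    P.natDegree + Q.natDegree + R.natDegree ≤ n →
    X * (Q ^ 2 + P * R) + (P ^ 2 + P * Q + R ^ 2) = 0 →
    P = 0 ∧ Q = 0 ∧ R = 0 := by
  induction n using Nat.strong_induction_on with
  | _ n ih =>
    intro P Q R hdeg heq
    by_cases hall : P = 0 ∧ Q = 0 ∧ R = 0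
    · exact hall
    have hs : (X - 1 : Polynomial (ZMod 2)) ≠ 0 := by
      simpa using (X_sub_C_ne_zero (1 : ZMod 2))
    -- evaluate at 1
    have hev := congrArg (Polynomial.eval 1) heq
    simp only [eval_add, eval_mul, eval_pow, eval_X, eval_zero] at hev
    obtain ⟨hp, hqr⟩ := fin_case (P.eval 1) (Q.eval 1) (R.eval 1) hev
    obtain ⟨A, hA⟩ : (X - 1 : Polynomial (ZMod 2)) ∣ P := by
      simpa using (dvd_iff_isRoot (a := (1 : ZMod 2))).2 hp
    obtain ⟨W, hW⟩ : (X - 1 : Polynomial (ZMod 2)) ∣ (Q - R) := by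
      have : IsRoot (Q - R) 1 := by simp [IsRoot, hqr]
      simpa using (dvd_iff_isRoot (a := (1 : ZMod 2))).2 this
    have hQ : Q = R + (X - 1) * W := by linear_combination hW
    -- second-order step at X-1 : show R.eval 1 = 0
    have hF : (X - 1) * (R ^ 2 + (X - 1) * (A * R + A * W + A ^ 2 + X * W ^ 2)) = 0 := by
      rw [hA, hQ] at heq
      linear_combination heq -
        (R ^ 2 - A * R - X * W * R + X * A * R + X ^ 2 * W * R) * two_eq_zero'
    have hF0 : R ^ 2 + (X - 1) * (A * R + A * W + A ^ 2 + X * W ^ 2) = 0 :=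
      (mul_eq_zero.1 hF).resolve_left hs
    have hr : R.eval 1 = 0 := by
      have h2 := congrArg (Polynomial.eval 1) hF0
      simp only [eval_add, eval_mul, eval_pow, eval_sub, eval_X, eval_one, eval_zero,
        sub_self, zero_mul, add_zero] at h2
      exact pow_eq_zero_iff (two_ne_zero) |>.1 h2
    have hq : Q.eval 1 = 0 := by
      have h3 : Q.eval 1 - R.eval 1 = 0 := hqr
      rw [hr] at h3; simpa using h3
    -- now all three are divisible by X - 1
    obtain ⟨A', hA'⟩ : (X - 1 : Polynomial (ZMod 2)) ∣ P := by
      simpa using (dvd_iff_isRoot (a := (1 : ZMod 2))).2 hp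
    obtain ⟨B', hB'⟩ : (X - 1 : Polynomial (ZMod 2)) ∣ Q := by
      simpa using (dvd_iff_isRoot (a := (1 : ZMod 2))).2 hq
    obtain ⟨C', hC'⟩ : (X - 1 : Polynomial (ZMod 2)) ∣ R := by
      simpa using (dvd_iff_isRoot (a := (1 : ZMod 2))).2 hr
    have heq2 : (X - 1) ^ 2 *
        (X * (B' ^ 2 + A' * C') + (A' ^ 2 + A' * B' + C' ^ 2)) = 0 := by
      rw [hA', hB', hC'] at heq
      linear_combination heq
    have heq3 : X * (B' ^ 2 + A' * C') + (A' ^ 2 + A' * B' + C' ^ 2) = 0 :=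
      (mul_eq_zero.1 heq2).resolve_left (pow_ne_zero 2 hs)
    -- degree bookkeeping
    obtain ⟨dA1, dA2⟩ := deg_aux hA'
    obtain ⟨dB1, dB2⟩ := deg_aux hB'
    obtain ⟨dC1, dC2⟩ := deg_aux hC'
    have hne : P ≠ 0 ∨ Q ≠ 0 ∨ R ≠ 0 := by tauto
    have hlt : A'.natDegree + B'.natDegree + C'.natDegree < n := by
      rcases hne with h | h | h
      · have := dA2 h; omega
      · have := dB2 h; omega
      · have := dC2 h; omega
    obtain ⟨hA0, hB0, hC0⟩ := ih _ hlt A' B' C' le_rfl heq3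
    refine ⟨?_, ?_, ?_⟩ <;> simp [hA', hB', hC', hA0, hB0, hC0]

/-- The conic `t(y² + xz) + x² + xy + z² = 0` in `ℙ²` over the rational function field
`𝔽₂(t)` has no `𝔽₂(t)`-rational points. -/
theorem stmt7 :
    ¬ ∃ x y z : RatFunc (ZMod 2), (x ≠ 0 ∨ y ≠ 0 ∨ z ≠ 0) ∧
      RatFunc.X * (y ^ 2 + x * z) + (x ^ 2 + x * y + z ^ 2) = 0 := by
  rintro ⟨x, y, z, hne, heq⟩
  set φ := algebraMap (Polynomial (ZMod 2)) (RatFunc (ZMod 2)) with hφ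
  set P := x.num * y.denom * z.denom with hP
  set Q := x.denom * y.num * z.denom with hQ
  set R := x.denom * y.denom * z.num with hR
  have hd : φ x.denom ≠ 0 := RatFunc.algebraMap_ne_zero (RatFunc.denom_ne_zero x)
  have hd' : φ y.denom ≠ 0 := RatFunc.algebraMap_ne_zero (RatFunc.denom_ne_zero y)
  have hd'' : φ z.denom ≠ 0 := RatFunc.algebraMap_ne_zero (RatFunc.denom_ne_zero z)
  have hx : φ x.num = x * φ x.denom := (div_eq_iff hd).1 (RatFunc.num_div_denom x)
  have hy : φ y.num = y * φ y.denom := (div_eq_iff hd').1 (RatFunc.num_div_denom y)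
  have hz : φ z.num = z * φ z.denom := (div_eq_iff hd'').1 (RatFunc.num_div_denom z)
  have hbig : φ (Polynomial.X * (Q ^ 2 + P * R) + (P ^ 2 + P * Q + R ^ 2)) =
      (φ x.denom * φ y.denom * φ z.denom) ^ 2 *
        (RatFunc.X * (y ^ 2 + x * z) + (x ^ 2 + x * y + z ^ 2)) := by
    simp only [hP, hQ, hR, map_add, map_mul, map_pow, hx, hy, hz]
    simp only [hφ, RatFunc.algebraMap_X]
    ring
  rw [heq, mul_zero] at hbig
  have hpoly : Polynomial.X * (Q ^ 2 + P * R) + (P ^ 2 + P * Q + R ^ 2) = 0 :=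
    RatFunc.algebraMap_injective (ZMod 2) (by simpa [hφ] using hbig)
  obtain ⟨hP0, hQ0, hR0⟩ := key (P.natDegree + Q.natDegree + R.natDegree) P Q R le_rfl hpoly
  rcases hne with h | h | h
  · exact h (RatFunc.num_eq_zero_iff.1 (by
      rcases mul_eq_zero.1 ((mul_eq_zero.1 hP0).resolve_right (RatFunc.denom_ne_zero z)) with
        h' | h'
      · exact h'
      · exact absurd h' (RatFunc.denom_ne_zero y)))
  · exact h (RatFunc.num_eq_zero_iff.1 (by
      rcases mul_eq_zero.1 ((mul_eq_zero.1 hQ0).resolve_right (RatFunc.denom_ne_zero z)) with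
        h' | h'
      · exact absurd h' (RatFunc.denom_ne_zero x)
      · exact h'))
  · exact h (RatFunc.num_eq_zero_iff.1
      ((mul_eq_zero.1 hR0).resolve_left
        (mul_ne_zero (RatFunc.denom_ne_zero x) (RatFunc.denom_ne_zero y))))
end

section
/- The conic in P^2 over F_2(t) given by t(y^2+xy) + x^2 + xz + z^2 = 0 has no F_2(t)-rational points, but acquires a rational point over the degree-2 extension F_2(√t). -/
open Polynomial

private lemma zmod2_aux : ∀ a b : ZMod 2, a ^ 2 + a * b + b ^ 2 = 0 → a = 0 ∧ b = 0 := by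
  decide

private lemma descent : ∀ (n : ℕ) (x y z : Polynomial (ZMod 2)),
    x.natDegree + y.natDegree + z.natDegree ≤ n →
    X * (y ^ 2 + x * y) + (x ^ 2 + x * z + z ^ 2) = 0 → x = 0 ∧ y = 0 ∧ z = 0 := by
  intro n
  induction n using Nat.strong_induction_on with
  | _ n ih =>
  intro x y z hdeg heq
  have h2 : (2 : Polynomial (ZMod 2)) = 0 := by
    exact_mod_cast CharP.cast_eq_zero (Polynomial (ZMod 2)) 2
  -- evaluate at 0
  have h0 := congrArg (Polynomial.eval 0) heq
  simp only [Polynomial.eval_add, Polynomial.eval_mul, Polynomial.eval_pow,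
    Polynomial.eval_X, Polynomial.eval_zero, zero_mul, zero_add] at h0
  have hxz0 := zmod2_aux (x.eval 0) (z.eval 0) (by linear_combination h0)
  have hx : X ∣ x := Polynomial.X_dvd_iff.mpr (by
    rw [Polynomial.coeff_zero_eq_eval_zero]; exact hxz0.1)
  have hz : X ∣ z := Polynomial.X_dvd_iff.mpr (by
    rw [Polynomial.coeff_zero_eq_eval_zero]; exact hxz0.2)
  obtain ⟨x₁, rfl⟩ := hx
  obtain ⟨z₁, rfl⟩ := hz
  have hXne : (X : Polynomial (ZMod 2)) ≠ 0 := Polynomial.X_ne_zero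
  have h3 : X * (y ^ 2 + X * (x₁ * y + x₁ ^ 2 + x₁ * z₁ + z₁ ^ 2)) = 0 := by
    linear_combination heq
  have h4 : y ^ 2 + X * (x₁ * y + x₁ ^ 2 + x₁ * z₁ + z₁ ^ 2) = 0 := by
    rcases mul_eq_zero.mp h3 with h | h
    · exact absurd h hXne
    · exact h
  have hy : X ∣ y := by
    refine Polynomial.prime_X.dvd_of_dvd_pow (n := 2) ⟨x₁ * y + x₁ ^ 2 + x₁ * z₁ + z₁ ^ 2, ?_⟩
    linear_combination h4 - X * (x₁ * y + x₁ ^ 2 + x₁ * z₁ + z₁ ^ 2) * h2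
  obtain ⟨y₁, rfl⟩ := hy
  have h5 : X * (X * (y₁ ^ 2 + x₁ * y₁) + (x₁ ^ 2 + x₁ * z₁ + z₁ ^ 2)) = 0 := by
    linear_combination h4
  have heq' : X * (y₁ ^ 2 + x₁ * y₁) + (x₁ ^ 2 + x₁ * z₁ + z₁ ^ 2) = 0 := by
    rcases mul_eq_zero.mp h5 with h | h
    · exact absurd h hXne
    · exact h
  by_cases hall : x₁ = 0 ∧ y₁ = 0 ∧ z₁ = 0
  · obtain ⟨rfl, rfl, rfl⟩ := hall
    simp
  · have hstep : ∀ p : Polynomial (ZMod 2), p ≠ 0 → (X * p).natDegree = p.natDegree + 1 := by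
      intro p hp
      rw [Polynomial.natDegree_mul hXne hp, Polynomial.natDegree_X]
      omega
    have hle : ∀ p : Polynomial (ZMod 2), p.natDegree ≤ (X * p).natDegree := by
      intro p
      by_cases hp : p = 0
      · simp [hp]
      · rw [hstep p hp]; omega
    have hlt : x₁.natDegree + y₁.natDegree + z₁.natDegree <
        (X * x₁).natDegree + (X * y₁).natDegree + (X * z₁).natDegree := by
      push_neg at hall
      rcases eq_or_ne x₁ 0 with h | h
      · rcases eq_or_ne y₁ 0 with h' | h'
        · have hz' : z₁ ≠ 0 := by tauto
          have := hstep z₁ hz'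
          have := hle x₁
          have := hle y₁
          omega
        · have := hstep y₁ h'
          have := hle x₁
          have := hle z₁
          omega
      · have := hstep x₁ h
        have := hle y₁
        have := hle z₁
        omega
    obtain ⟨rfl, rfl, rfl⟩ := ih (x₁.natDegree + y₁.natDegree + z₁.natDegree)
      (lt_of_lt_of_le hlt hdeg) x₁ y₁ z₁ le_rfl heq'
    simp

/-- The conic `t(y² + xy) + x² + xz + z² = 0` over `𝔽₂(t)` has no rational points, but
acquires a rational point over the degree-2 extension `𝔽₂(√t)`.  The extension
`𝔽₂(√t)` is identified with the rational function field `𝔽₂(u)` in which `t = u²`,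
so having a point over `𝔽₂(√t)` is expressed by substituting `t = X²`. -/
theorem stmt8 :
    (¬ ∃ x y z : RatFunc (ZMod 2), (x ≠ 0 ∨ y ≠ 0 ∨ z ≠ 0) ∧
      RatFunc.X * (y ^ 2 + x * y) + (x ^ 2 + x * z + z ^ 2) = 0) ∧
    (∃ x y z : RatFunc (ZMod 2), (x ≠ 0 ∨ y ≠ 0 ∨ z ≠ 0) ∧
      RatFunc.X ^ 2 * (y ^ 2 + x * y) + (x ^ 2 + x * z + z ^ 2) = 0) := by
  constructor
  · rintro ⟨x, y, z, hne, heq⟩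
    set A := algebraMap (Polynomial (ZMod 2)) (RatFunc (ZMod 2)) with hA
    have hdx : A x.denom ≠ 0 := RatFunc.algebraMap_ne_zero x.denom_ne_zero
    have hdy : A y.denom ≠ 0 := RatFunc.algebraMap_ne_zero y.denom_ne_zero
    have hdz : A z.denom ≠ 0 := RatFunc.algebraMap_ne_zero z.denom_ne_zero
    have hxe : x * A x.denom = A x.num := by
      have h := RatFunc.num_div_denom x
      rw [div_eq_iff hdx] at h
      exact h.symm
    have hye : y * A y.denom = A y.num := by
      have h := RatFunc.num_div_denom y
      rw [div_eq_iff hdy] at h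
      exact h.symm
    have hze : z * A z.denom = A z.num := by
      have h := RatFunc.num_div_denom z
      rw [div_eq_iff hdz] at h
      exact h.symm
    set p := x.num * (y.denom * z.denom) with hp
    set q := y.num * (x.denom * z.denom) with hq
    set r := z.num * (x.denom * y.denom) with hr
    have heqP : X * (q ^ 2 + p * q) + (p ^ 2 + p * r + r ^ 2) = 0 := by
      apply RatFunc.algebraMap_injective (ZMod 2)
      have hX : A X = RatFunc.X := RatFunc.algebraMap_X
      simp only [map_add, map_mul, map_pow, map_zero, hp, hq, hr, hX, RatFunc.algebraMap_X]
      rw [← hxe, ← hye, ← hze]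
      linear_combination (A x.denom * A y.denom * A z.denom) ^ 2 * heq
    obtain ⟨hp0, hq0, hr0⟩ := descent (p.natDegree + q.natDegree + r.natDegree) p q r le_rfl heqP
    have hx0 : x = 0 := by
      have : A p = x * (A x.denom * A y.denom * A z.denom) := by
        simp only [hp, map_mul]; rw [← hxe]; ring
      rw [hp0, map_zero] at this
      rcases mul_eq_zero.mp this.symm with h | h
      · exact h
      · exact absurd h (by simp [hdx, hdy, hdz, mul_eq_zero])
    have hy0 : y = 0 := by
      have : A q = y * (A x.denom * A y.denom * A z.denom) := by
        simp only [hq, map_mul]; rw [← hye]; ring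
      rw [hq0, map_zero] at this
      rcases mul_eq_zero.mp this.symm with h | h
      · exact h
      · exact absurd h (by simp [hdx, hdy, hdz, mul_eq_zero])
    have hz0 : z = 0 := by
      have : A r = z * (A x.denom * A y.denom * A z.denom) := by
        simp only [hr, map_mul]; rw [← hze]; ring
      rw [hr0, map_zero] at this
      rcases mul_eq_zero.mp this.symm with h | h
      · exact h
      · exact absurd h (by simp [hdx, hdy, hdz, mul_eq_zero])
    rcases hne with h | h | h <;> [exact h hx0; exact h hy0; exact h hz0]
  · refine ⟨0, 1, RatFunc.X, Or.inr (Or.inl one_ne_zero), ?_⟩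
    have h2 : (2 : RatFunc (ZMod 2)) = 0 := by
      have h2p : (2 : Polynomial (ZMod 2)) = 0 := by
        exact_mod_cast CharP.cast_eq_zero (Polynomial (ZMod 2)) 2
      have := congrArg (algebraMap (Polynomial (ZMod 2)) (RatFunc (ZMod 2))) h2p
      rw [map_ofNat, map_zero] at this
      exact this
    linear_combination RatFunc.X ^ 2 * h2
end

section
/- Let k be a perfect field and let P = {p_1,...,p_5} be a Galois orbit of size 5 in P^2 over the algebraic closure, not all five points collinear. Then no three of the points p_1,...,p_5 are collinear. -/
/-- Projective equality of two vectors of `K³` (points of `ℙ²`). -/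
def ProjEq3 {K : Type*} [Field K] (a b : Fin 3 → K) : Prop :=
  ∃ c : K, c ≠ 0 ∧ c • a = b

/-- Three points of `ℙ²` (given by vectors of `K³`) are collinear if some nonzero linear
form vanishes on all of them. -/
def Collinear3 {K : Type*} [Field K] (a b c : Fin 3 → K) : Prop :=
  ∃ f : (Fin 3 → K) →ₗ[K] K, f ≠ 0 ∧ f a = 0 ∧ f b = 0 ∧ f c = 0

namespace Stmt10Aux
variable {K : Type*} [Field K]

lemma projEq3_symm {a b : Fin 3 → K} (h : ProjEq3 a b) : ProjEq3 b a := by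
  obtain ⟨c, hc, h⟩ := h
  exact ⟨c⁻¹, inv_ne_zero hc, by rw [← h, smul_smul, inv_mul_cancel₀ hc, one_smul]⟩

lemma projEq3_trans {a b c : Fin 3 → K} (h1 : ProjEq3 a b) (h2 : ProjEq3 b c) : ProjEq3 a c := by
  obtain ⟨c1, hc1, h1⟩ := h1; obtain ⟨c2, hc2, h2⟩ := h2
  exact ⟨c2 * c1, mul_ne_zero hc2 hc1, by rw [← h2, ← h1, smul_smul]⟩

lemma ker_eq_ker {f g : (Fin 3 → K) →ₗ[K] K} (hf : f ≠ 0) (hg : g ≠ 0)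
    {a b : Fin 3 → K} (ha : a ≠ 0) (hb : b ≠ 0) (hab : ¬ ProjEq3 a b)
    (hfa : f a = 0) (hfb : f b = 0) (hga : g a = 0) (hgb : g b = 0) :
    ∀ x, f x = 0 ↔ g x = 0 := by
  have hind : LinearIndependent K ![b, a] := by
    rw [linearIndependent_fin2]
    refine ⟨by simpa using ha, fun c hc => ?_⟩
    simp only [Matrix.cons_val_one, Matrix.head_cons, Matrix.cons_val_zero] at hc
    have hc0 : c ≠ 0 := by rintro rfl; rw [zero_smul] at hc; exact hb hc.symm
    exact hab ⟨c, hc0, hc⟩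
  set W : Submodule K (Fin 3 → K) := Submodule.span K (Set.range ![b, a]) with hW
  have hWrank : Module.finrank K W = 2 := by
    rw [finrank_span_eq_card hind, Fintype.card_fin]
  have hker : ∀ (h : (Fin 3 → K) →ₗ[K] K), h ≠ 0 → h a = 0 → h b = 0 →
      LinearMap.ker h = W := by
    intro h h0 hha hhb
    have hle : W ≤ LinearMap.ker h := by
      rw [hW, Submodule.span_le]
      rintro x ⟨m, rfl⟩
      fin_cases m <;> simpa [LinearMap.mem_ker]
    have hrange : LinearMap.range h = ⊤ := by
      obtain ⟨x, hx⟩ := DFunLike.ne_iff.mp h0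
      rw [Submodule.eq_top_iff']
      intro y
      exact ⟨(y * (h x)⁻¹) • x, by simp [mul_assoc, inv_mul_cancel₀ (by simpa using hx)]⟩
    have hkr : Module.finrank K (LinearMap.ker h) = 2 := by
      have := LinearMap.finrank_range_add_finrank_ker h
      rw [hrange, finrank_top] at this
      have h3 : Module.finrank K (Fin 3 → K) = 3 := by simp
      have h1 : Module.finrank K K = 1 := Module.finrank_self K
      omega
    exact (Submodule.eq_of_le_of_finrank_eq hle (by rw [hWrank, hkr])).symm
  have h1 := hker f hf hfa hfb
  have h2 := hker g hg hga hgb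
  intro x
  rw [← LinearMap.mem_ker, ← LinearMap.mem_ker, h1, h2]

def twist (σ : K ≃+* K) (f : (Fin 3 → K) →ₗ[K] K) : (Fin 3 → K) →ₗ[K] K where
  toFun x := σ (f (fun m => σ.symm (x m)))
  map_add' x y := by
    have h : (fun m => σ.symm ((x + y) m)) =
        (fun m => σ.symm (x m)) + (fun m => σ.symm (y m)) := by
      funext m; simp
    show σ (f fun m => σ.symm ((x + y) m)) = _
    rw [h, map_add, map_add]
  map_smul' c x := by
    have h : (fun m => σ.symm ((c • x) m)) =
        σ.symm c • (fun m => σ.symm (x m)) := by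
      funext m; simp [smul_eq_mul]
    show σ (f fun m => σ.symm ((c • x) m)) = _
    rw [h, map_smul]
    simp [smul_eq_mul]

lemma twist_apply_map (σ : K ≃+* K) (f : (Fin 3 → K) →ₗ[K] K) (x : Fin 3 → K) :
    twist σ f (fun m => σ (x m)) = σ (f x) := by
  simp [twist]

lemma twist_ne_zero (σ : K ≃+* K) {f : (Fin 3 → K) →ₗ[K] K} (hf : f ≠ 0) :
    twist σ f ≠ 0 := by
  obtain ⟨x, hx⟩ := DFunLike.ne_iff.mp hf
  intro h
  have := twist_apply_map σ f x
  rw [h] at this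
  simp only [LinearMap.zero_apply] at this
  exact hx (by simpa using σ.injective (by simpa using this.symm))


set_option maxRecDepth 10000 in
lemma comb : ∀ π : Equiv.Perm (Fin 5), π^5 = 1 → π ≠ 1 →
    ∀ S : Finset (Fin 5), 3 ≤ S.card → S.card ≤ 4 →
    (∀ m : Fin 5, m ≠ 0 → 2 ≤ (S ∩ S.image (π^(m:ℕ))).card → S.image (π^(m:ℕ)) = S) → False := by
  decide

end Stmt10Aux


/-- Let `k` be a perfect field and `p₁, …, p₅` a Galois orbit of size 5 in `ℙ²` over the
algebraic closure of `k` (encoded by nonzero vectors up to scalars, pairwise distinct,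
Galois-stable and with transitive Galois action), not all five points collinear.
Then no three of the points are collinear. -/
theorem stmt10 (k : Type*) [Field k] [PerfectField k]
    (p : Fin 5 → (Fin 3 → AlgebraicClosure k))
    (hne : ∀ i, p i ≠ 0)
    (hdist : ∀ i j, i ≠ j → ¬ ProjEq3 (p i) (p j))
    (hstab : ∀ σ : AlgebraicClosure k ≃ₐ[k] AlgebraicClosure k,
      ∃ π : Equiv.Perm (Fin 5), ∀ i, ProjEq3 (fun m => σ (p i m)) (p (π i)))
    (htrans : ∀ i j, ∃ σ : AlgebraicClosure k ≃ₐ[k] AlgebraicClosure k,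
      ProjEq3 (fun m => σ (p i m)) (p j))
    (hnotall : ¬ ∃ f : (Fin 3 → AlgebraicClosure k) →ₗ[AlgebraicClosure k] AlgebraicClosure k,
      f ≠ 0 ∧ ∀ i, f (p i) = 0) :
    ∀ i j l, i ≠ j → i ≠ l → j ≠ l → ¬ Collinear3 (p i) (p j) (p l) := by
  classical
  intro i j l hij hil hjl hcol
  obtain ⟨f, hf0, hfi, hfj, hfl⟩ := hcol
  -- uniqueness of the permutation attached to σ
  have uniq : ∀ (σ : AlgebraicClosure k ≃ₐ[k] AlgebraicClosure k)
      (π π' : Equiv.Perm (Fin 5)),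
      (∀ a, ProjEq3 (fun m => σ (p a m)) (p (π a))) →
      (∀ a, ProjEq3 (fun m => σ (p a m)) (p (π' a))) → π = π' := by
    intro σ π π' h h'
    ext x
    by_contra hne'
    have hne'' : π x ≠ π' x := fun hc => hne' (by rw [hc])
    exact hdist _ _ hne'' (Stmt10Aux.projEq3_trans (Stmt10Aux.projEq3_symm (h x)) (h' x))
  choose φfun hφ using hstab
  have hmul : ∀ σ τ : AlgebraicClosure k ≃ₐ[k] AlgebraicClosure k,
      φfun (σ * τ) = φfun σ * φfun τ := by
    intro σ τ
    refine uniq (σ * τ) _ _ (hφ _) ?_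
    intro a
    obtain ⟨c, hc, hceq⟩ := hφ τ a
    obtain ⟨d, hd, hdeq⟩ := hφ σ (φfun τ a)
    refine ⟨d * σ c, mul_ne_zero hd (fun h => hc (by simpa using σ.injective (by simpa using h))),
      ?_⟩
    funext m
    have h1 : c * τ (p a m) = p (φfun τ a) m := by
      have := congrFun hceq m; simpa [smul_eq_mul] using this
    have h2 : d * σ (p (φfun τ a) m) = p (φfun σ (φfun τ a)) m := by
      have := congrFun hdeq m; simpa [smul_eq_mul] using this
    have h3 : σ c * σ (τ (p a m)) = σ (p (φfun τ a) m) := by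
      rw [← map_mul, h1]
    simp only [Pi.smul_apply, smul_eq_mul, AlgEquiv.mul_apply, Equiv.Perm.mul_apply]
    rw [mul_assoc, h3, h2]
  let φ : (AlgebraicClosure k ≃ₐ[k] AlgebraicClosure k) →* Equiv.Perm (Fin 5) :=
    MonoidHom.mk' φfun hmul
  -- transitivity of the range on Fin 5
  have hreach : ∀ x : Fin 5, ∃ g : φ.range, (g : Equiv.Perm (Fin 5)) 0 = x := by
    intro x
    obtain ⟨σ, hσ⟩ := htrans 0 x
    refine ⟨⟨φfun σ, ⟨σ, rfl⟩⟩, ?_⟩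
    show φfun σ 0 = x
    by_contra hne'
    exact hdist _ _ hne' (Stmt10Aux.projEq3_trans (Stmt10Aux.projEq3_symm (hφ σ 0)) hσ)
  haveI : MulAction.IsPretransitive φ.range (Fin 5) := by
    constructor
    intro x y
    obtain ⟨gx, hgx⟩ := hreach x
    obtain ⟨gy, hgy⟩ := hreach y
    refine ⟨gy * gx⁻¹, ?_⟩
    have hx0 : ((gx : Equiv.Perm (Fin 5)))⁻¹ x = 0 := by
      rw [← hgx]; exact Equiv.symm_apply_apply _ _
    show ((gy * gx⁻¹ : φ.range) : Equiv.Perm (Fin 5)) x = y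
    rw [Subgroup.coe_mul, InvMemClass.coe_inv, Equiv.Perm.mul_apply, hx0, hgy]
  have hdvd : 5 ∣ Nat.card φ.range := by
    have h1 : (MulAction.stabilizer φ.range (0 : Fin 5)).index = 5 := by
      rw [MulAction.index_stabilizer_of_transitive]
      simp [Nat.card_eq_fintype_card]
    have h2 := Subgroup.index_dvd_card (MulAction.stabilizer φ.range (0 : Fin 5))
    rwa [h1] at h2
  haveI : Fact (Nat.Prime 5) := ⟨by norm_num⟩
  obtain ⟨g, hg⟩ := exists_prime_orderOf_dvd_card' 5 hdvd
  have hπord : orderOf ((g : Equiv.Perm (Fin 5))) = 5 := by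
    have h := orderOf_injective φ.range.subtype (Subgroup.subtype_injective _) g
    rw [hg] at h
    exact h
  have hπ5 : (g : Equiv.Perm (Fin 5)) ^ 5 = 1 := by
    have := pow_orderOf_eq_one ((g : Equiv.Perm (Fin 5)))
    rwa [hπord] at this
  have hπ1 : (g : Equiv.Perm (Fin 5)) ≠ 1 := by
    intro h
    rw [h, orderOf_one] at hπord
    omega
  -- the set of indices on the line f = 0
  set S : Finset (Fin 5) := Finset.univ.filter (fun a => f (p a) = 0) with hSdef
  have hmem : ∀ a, a ∈ S ↔ f (p a) = 0 := by
    intro a; simp [hSdef]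
  have hS3 : 3 ≤ S.card := by
    have hsub : ({i, j, l} : Finset (Fin 5)) ⊆ S := by
      intro x hx
      simp only [Finset.mem_insert, Finset.mem_singleton] at hx
      rcases hx with rfl | rfl | rfl <;> rw [hmem] <;> assumption
    have hcard : ({i, j, l} : Finset (Fin 5)).card = 3 := by
      rw [Finset.card_insert_of_notMem (by simp [hij, hil]),
        Finset.card_insert_of_notMem (by simp [hjl]), Finset.card_singleton]
    rw [← hcard]
    exact Finset.card_le_card hsub
  have hS4 : S.card ≤ 4 := by
    by_contra h
    have h5 : S.card = 5 := by
      have := Finset.card_le_card (Finset.subset_univ S)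
      simp only [Finset.card_univ, Fintype.card_fin] at this
      omega
    have hSuniv : S = Finset.univ := Finset.eq_univ_of_card S (by simp [h5])
    refine hnotall ⟨f, hf0, fun a => ?_⟩
    rw [← hmem]
    exact hSuniv ▸ Finset.mem_univ a
  -- the key hypothesis for the combinatorial lemma
  have hmain : ∀ m : Fin 5, m ≠ 0 →
      2 ≤ (S ∩ S.image ((g : Equiv.Perm (Fin 5)) ^ (m : ℕ))).card →
      S.image ((g : Equiv.Perm (Fin 5)) ^ (m : ℕ)) = S := by
    intro m _ h2
    set ρ : Equiv.Perm (Fin 5) := (g : Equiv.Perm (Fin 5)) ^ (m : ℕ) with hρdef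
    have hρmem : ρ ∈ φ.range := by
      have hc : ρ = ((g ^ (m : ℕ) : φ.range) : Equiv.Perm (Fin 5)) := by
        rw [hρdef]; push_cast; rfl
      rw [hc]
      exact Subtype.mem _
    obtain ⟨σ, hσ⟩ := hρmem
    have hσ' : φfun σ = ρ := hσ
    have hR : ∀ a, ProjEq3 (fun mm => σ (p a mm)) (p (ρ a)) := by
      intro a
      have := hφ σ a
      rwa [hσ'] at this
    set gl : (Fin 3 → AlgebraicClosure k) →ₗ[AlgebraicClosure k] AlgebraicClosure k :=
      Stmt10Aux.twist σ.toRingEquiv f with hgl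
    have hgl0 : gl ≠ 0 := Stmt10Aux.twist_ne_zero _ hf0
    have hkey : ∀ a, (f (p a) = 0 ↔ gl (p (ρ a)) = 0) := by
      intro a
      obtain ⟨c, hc, hceq⟩ := hR a
      have htw : gl (fun mm => σ (p a mm)) = σ (f (p a)) :=
        Stmt10Aux.twist_apply_map σ.toRingEquiv f (p a)
      have hval : gl (p (ρ a)) = c * σ (f (p a)) := by
        rw [← hceq, map_smul, smul_eq_mul, htw]
      rw [hval]
      constructor
      · intro h; rw [h, map_zero, mul_zero]
      · intro h
        rcases mul_eq_zero.mp h with h | h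
        · exact absurd h hc
        · exact σ.injective (by simpa using h)
    have hSimage : S.image ρ = Finset.univ.filter (fun a => gl (p a) = 0) := by
      ext x
      simp only [Finset.mem_image, Finset.mem_filter, Finset.mem_univ, true_and]
      constructor
      · rintro ⟨a, ha, rfl⟩
        exact (hkey a).mp ((hmem a).mp ha)
      · intro hx
        refine ⟨ρ⁻¹ x, ?_, Equiv.apply_symm_apply _ _⟩
        rw [hmem, hkey (ρ⁻¹ x), (by exact Equiv.apply_symm_apply ρ x : ρ (ρ⁻¹ x) = x)]
        exact hx
    obtain ⟨a, ha, b, hb, hab⟩ := Finset.one_lt_card.mp (by omega : 1 < (S ∩ S.image ρ).card)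
    have hfa : f (p a) = 0 := (hmem a).mp (Finset.mem_inter.mp ha).1
    have hfb : f (p b) = 0 := (hmem b).mp (Finset.mem_inter.mp hb).1
    have haI := (Finset.mem_inter.mp ha).2
    have hbI := (Finset.mem_inter.mp hb).2
    rw [hSimage] at haI hbI
    have hga : gl (p a) = 0 := by
      simpa using (Finset.mem_filter.mp haI).2
    have hgb : gl (p b) = 0 := by
      simpa using (Finset.mem_filter.mp hbI).2
    have hkereq := Stmt10Aux.ker_eq_ker hf0 hgl0 (hne a) (hne b) (hdist a b hab)
      hfa hfb hga hgb
    rw [hSimage]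
    ext x
    rw [Finset.mem_filter, hmem]
    simp only [Finset.mem_univ, true_and]
    exact (hkereq (p x)).symm
  exact Stmt10Aux.comb _ hπ5 hπ1 S hS3 hS4 hmain
end

section
/- Let k be a perfect field, {p_1,...,p_5} a Galois orbit of size 5 in P^2 with not all five points collinear, and {q_1,q_2} a Galois orbit of size 2. Then either all seven points lie on a common conic, or the seven points are in general position (no three collinear, no six on a conic). -/
/-- The point `v` of `ℙ²` lies on the conic with coefficient vector `q`. -/
def OnConic {K : Type*} [Field K] (q : Fin 6 → K) (v : Fin 3 → K) : Prop :=
  q 0 * v 0 ^ 2 + q 1 * v 1 ^ 2 + q 2 * v 2 ^ 2 +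
    q 3 * (v 0 * v 1) + q 4 * (v 0 * v 2) + q 5 * (v 1 * v 2) = 0

set_option linter.unreachableTactic false
set_option linter.unusedTactic false

namespace Stmt11Aux

variable {K : Type*} [Field K]

def dot3 (f v : Fin 3 → K) : K := f 0 * v 0 + f 1 * v 1 + f 2 * v 2

def cross (a b : Fin 3 → K) : Fin 3 → K :=
  ![a 1 * b 2 - a 2 * b 1, a 2 * b 0 - a 0 * b 2, a 0 * b 1 - a 1 * b 0]

lemma vec3_eq_zero {v : Fin 3 → K} (h0 : v 0 = 0) (h1 : v 1 = 0) (h2 : v 2 = 0) : v = 0 := by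
  funext m; fin_cases m <;> assumption

lemma vec3_ne_zero {v : Fin 3 → K} (h : v ≠ 0) : v 0 ≠ 0 ∨ v 1 ≠ 0 ∨ v 2 ≠ 0 := by
  by_contra hc
  push_neg at hc
  exact h (vec3_eq_zero hc.1 hc.2.1 hc.2.2)

lemma dot3_cross_left (a b : Fin 3 → K) : dot3 (cross a b) a = 0 := by
  simp [dot3, cross]; ring

lemma dot3_cross_right (a b : Fin 3 → K) : dot3 (cross a b) b = 0 := by
  simp [dot3, cross]; ring

lemma dot3_smul_left (l : K) (F v : Fin 3 → K) : dot3 (l • F) v = l * dot3 F v := by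
  simp [dot3]; ring

lemma dot3_smul_right (l : K) (F v : Fin 3 → K) : dot3 F (l • v) = l * dot3 F v := by
  simp [dot3]; ring

lemma cross_smul_left (l : K) (a b : Fin 3 → K) : cross (l • a) b = l • cross a b := by
  funext m; fin_cases m <;> simp [cross] <;> ring

lemma cross_smul_right (l : K) (a b : Fin 3 → K) : cross a (l • b) = l • cross a b := by
  funext m; fin_cases m <;> simp [cross] <;> ring

lemma cross_eq_zero {a b : Fin 3 → K} (ha : a ≠ 0) (h : cross a b = 0) :
    ∃ μ : K, b = μ • a := by
  have h0 := congrFun h 0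
  have h1 := congrFun h 1
  have h2 := congrFun h 2
  simp [cross, sub_eq_zero] at h0 h1 h2
  rcases vec3_ne_zero ha with ht | ht | ht
  · refine ⟨b 0 / a 0, ?_⟩
    have e0 : b 0 = b 0 / a 0 * a 0 := by field_simp
    have e1 : b 1 = b 0 / a 0 * a 1 := by
      field_simp; first | linear_combination h2 | linear_combination -h2
    have e2 : b 2 = b 0 / a 0 * a 2 := by
      field_simp; first | linear_combination h1 | linear_combination -h1
    funext m; fin_cases m
    · exact e0
    · exact e1
    · exact e2
  · refine ⟨b 1 / a 1, ?_⟩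
    have e0 : b 0 = b 1 / a 1 * a 0 := by
      field_simp; first | linear_combination h2 | linear_combination -h2
    have e1 : b 1 = b 1 / a 1 * a 1 := by field_simp
    have e2 : b 2 = b 1 / a 1 * a 2 := by
      field_simp; first | linear_combination h0 | linear_combination -h0
    funext m; fin_cases m
    · exact e0
    · exact e1
    · exact e2
  · refine ⟨b 2 / a 2, ?_⟩
    have e0 : b 0 = b 2 / a 2 * a 0 := by
      field_simp; first | linear_combination h1 | linear_combination -h1
    have e1 : b 1 = b 2 / a 2 * a 1 := by
      field_simp; first | linear_combination h0 | linear_combination -h0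
    have e2 : b 2 = b 2 / a 2 * a 2 := by field_simp
    funext m; fin_cases m
    · exact e0
    · exact e1
    · exact e2

lemma projEq3_symm {a b : Fin 3 → K} (h : ProjEq3 a b) : ProjEq3 b a := by
  obtain ⟨c, hc, rfl⟩ := h
  exact ⟨c⁻¹, inv_ne_zero hc, by rw [smul_smul, inv_mul_cancel₀ hc, one_smul]⟩

lemma projEq3_trans {a b c : Fin 3 → K} (h : ProjEq3 a b) (h' : ProjEq3 b c) : ProjEq3 a c := by
  obtain ⟨u, hu, rfl⟩ := h
  obtain ⟨w, hw, rfl⟩ := h'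
  exact ⟨w * u, mul_ne_zero hw hu, (smul_smul w u a).symm⟩

lemma projEq3_refl (a : Fin 3 → K) : ProjEq3 a a := ⟨1, one_ne_zero, one_smul _ _⟩

lemma cross_ne_zero {a b : Fin 3 → K} (ha : a ≠ 0) (hb : b ≠ 0) (h : ¬ ProjEq3 a b) :
    cross a b ≠ 0 := by
  intro hc
  obtain ⟨μ, rfl⟩ := cross_eq_zero ha hc
  have hμ : μ ≠ 0 := by rintro rfl; simp at hb
  exact h ⟨μ, hμ, rfl⟩

lemma line_unique {a b F : Fin 3 → K} (h : cross a b ≠ 0)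
    (hFa : dot3 F a = 0) (hFb : dot3 F b = 0) : ∃ l : K, F = l • cross a b := by
  set c := cross a b with hc
  have m01 : F 0 * c 1 = F 1 * c 0 := by
    simp only [hc, cross, dot3] at *; simp at *
    linear_combination (a 2 * hFb - b 2 * hFa)
  have m02 : F 0 * c 2 = F 2 * c 0 := by
    simp only [hc, cross, dot3] at *; simp at *
    first | linear_combination (a 1 * hFb - b 1 * hFa) | linear_combination (b 1 * hFa - a 1 * hFb)
  have m12 : F 1 * c 2 = F 2 * c 1 := by
    simp only [hc, cross, dot3] at *; simp at *
    first | linear_combination (a 0 * hFb - b 0 * hFa) | linear_combination (b 0 * hFa - a 0 * hFb)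
  rcases vec3_ne_zero h with ht | ht | ht
  · refine ⟨F 0 / c 0, ?_⟩
    have e0 : F 0 = F 0 / c 0 * c 0 := by field_simp
    have e1 : F 1 = F 0 / c 0 * c 1 := by field_simp; linear_combination -m01
    have e2 : F 2 = F 0 / c 0 * c 2 := by field_simp; linear_combination -m02
    funext m; fin_cases m
    · exact e0
    · exact e1
    · exact e2
  · refine ⟨F 1 / c 1, ?_⟩
    have e0 : F 0 = F 1 / c 1 * c 0 := by field_simp; linear_combination m01
    have e1 : F 1 = F 1 / c 1 * c 1 := by field_simp
    have e2 : F 2 = F 1 / c 1 * c 2 := by field_simp; linear_combination -m12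
    funext m; fin_cases m
    · exact e0
    · exact e1
    · exact e2
  · refine ⟨F 2 / c 2, ?_⟩
    have e0 : F 0 = F 2 / c 2 * c 0 := by field_simp; linear_combination m02
    have e1 : F 1 = F 2 / c 2 * c 1 := by field_simp; linear_combination m12
    have e2 : F 2 = F 2 / c 2 * c 2 := by field_simp
    funext m; fin_cases m
    · exact e0
    · exact e1
    · exact e2

def dotMap (F : Fin 3 → K) : (Fin 3 → K) →ₗ[K] K :=
  F 0 • LinearMap.proj 0 + F 1 • LinearMap.proj 1 + F 2 • LinearMap.proj 2

lemma dotMap_apply (F v : Fin 3 → K) : dotMap F v = dot3 F v := by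
  simp [dotMap, dot3]

lemma collinear3_iff {a b c : Fin 3 → K} :
    Collinear3 a b c ↔
      ∃ F : Fin 3 → K, F ≠ 0 ∧ dot3 F a = 0 ∧ dot3 F b = 0 ∧ dot3 F c = 0 := by
  constructor
  · rintro ⟨f, hf, ha, hb, hc⟩
    have repr : ∀ v : Fin 3 → K, f v = dot3 (fun m => f (Pi.single m 1)) v := by
      intro v
      have hv : v = v 0 • (Pi.single 0 1 : Fin 3 → K) + v 1 • (Pi.single 1 1 : Fin 3 → K) + v 2 • (Pi.single 2 1 : Fin 3 → K) := by
        funext m; fin_cases m <;> simp [Pi.single_apply]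
      conv_lhs => rw [hv]
      simp only [map_add, map_smul, smul_eq_mul, dot3]
      ring
    refine ⟨fun m => f (Pi.single m 1), ?_, by rw [← repr]; exact ha,
      by rw [← repr]; exact hb, by rw [← repr]; exact hc⟩
    intro h0
    apply hf
    refine LinearMap.ext fun v => ?_
    rw [repr v, h0]
    simp [dot3]
  · rintro ⟨F, hF, ha, hb, hc⟩
    refine ⟨dotMap F, ?_, ?_, ?_, ?_⟩
    · intro h0
      apply hF
      funext m
      have := congrFun (congrArg DFunLike.coe h0) (Pi.single m 1)
      simp only [dotMap_apply, LinearMap.zero_apply] at this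
      rw [show F m = dot3 F (Pi.single m 1) from ?_]
      · exact this
      · fin_cases m <;> simp [dot3, Pi.single_apply]
    · rw [dotMap_apply]; exact ha
    · rw [dotMap_apply]; exact hb
    · rw [dotMap_apply]; exact hc

def conicFun (v : Fin 3 → K) : (Fin 6 → K) →ₗ[K] K :=
  (v 0 ^ 2) • LinearMap.proj 0 + (v 1 ^ 2) • LinearMap.proj 1 + (v 2 ^ 2) • LinearMap.proj 2 +
    (v 0 * v 1) • LinearMap.proj 3 + (v 0 * v 2) • LinearMap.proj 4 +
    (v 1 * v 2) • LinearMap.proj 5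

lemma conicFun_apply (v : Fin 3 → K) (c : Fin 6 → K) :
    conicFun v c = c 0 * v 0 ^ 2 + c 1 * v 1 ^ 2 + c 2 * v 2 ^ 2 +
      c 3 * (v 0 * v 1) + c 4 * (v 0 * v 2) + c 5 * (v 1 * v 2) := by
  simp [conicFun]; ring

lemma onConic_iff (c : Fin 6 → K) (v : Fin 3 → K) : OnConic c v ↔ conicFun v c = 0 := by
  rw [conicFun_apply, OnConic]

lemma conicFun_smul_point (μ : K) (v : Fin 3 → K) (c : Fin 6 → K) :
    conicFun (μ • v) c = μ ^ 2 * conicFun v c := by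
  simp only [conicFun_apply, Pi.smul_apply, smul_eq_mul]; ring

lemma conicFun_projEq {v v' : Fin 3 → K} (h : ProjEq3 v v') (c : Fin 6 → K)
    (hv : conicFun v c = 0) : conicFun v' c = 0 := by
  obtain ⟨μ, hμ, rfl⟩ := h
  rw [conicFun_smul_point, hv, mul_zero]

def conicMul (f g : Fin 3 → K) : Fin 6 → K :=
  ![f 0 * g 0, f 1 * g 1, f 2 * g 2, f 0 * g 1 + f 1 * g 0,
    f 0 * g 2 + f 2 * g 0, f 1 * g 2 + f 2 * g 1]

lemma conicFun_conicMul (f g v : Fin 3 → K) :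
    conicFun v (conicMul f g) = dot3 f v * dot3 g v := by
  have h5 : conicMul f g 5 = f 1 * g 2 + f 2 * g 1 := rfl
  have h4 : conicMul f g 4 = f 0 * g 2 + f 2 * g 0 := rfl
  have h3 : conicMul f g 3 = f 0 * g 1 + f 1 * g 0 := rfl
  have h2 : conicMul f g 2 = f 2 * g 2 := rfl
  have h1 : conicMul f g 1 = f 1 * g 1 := rfl
  have h0 : conicMul f g 0 = f 0 * g 0 := rfl
  rw [conicFun_apply, h0, h1, h2, h3, h4, h5, dot3, dot3]; ring

lemma dot3_projEq {F v v' : Fin 3 → K} (h : ProjEq3 v v') (hv : dot3 F v = 0) :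
    dot3 F v' = 0 := by
  obtain ⟨μ, hμ, rfl⟩ := h
  rw [dot3_smul_right, hv, mul_zero]

/-- Transport of an incidence `q ∈ line(a,b)` along projective equalities. -/
lemma onL_transport {a a' b b' v v' : Fin 3 → K} (ha : ProjEq3 a a') (hb : ProjEq3 b b')
    (hv : ProjEq3 v v') (h : dot3 (cross a b) v = 0) : dot3 (cross a' b') v' = 0 := by
  obtain ⟨α, hα, rfl⟩ := ha
  obtain ⟨β, hβ, rfl⟩ := hb
  obtain ⟨γ, hγ, rfl⟩ := hv
  rw [cross_smul_left, cross_smul_right, smul_smul, dot3_smul_left, dot3_smul_right, h]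
  ring

/-- Through five points in general position there is at most one conic, up to scalar. -/
theorem conic_unique (v : Fin 5 → Fin 3 → K)
    (hne : ∀ i, v i ≠ 0)
    (hd : ∀ i j, i ≠ j → ¬ ProjEq3 (v i) (v j))
    (hcol : ∀ i j l, i ≠ j → i ≠ l → j ≠ l →
      ¬ ∃ F : Fin 3 → K, F ≠ 0 ∧ dot3 F (v i) = 0 ∧ dot3 F (v j) = 0 ∧ dot3 F (v l) = 0)
    (c c' : Fin 6 → K) (hc0 : c ≠ 0)
    (h1 : ∀ i, conicFun (v i) c = 0) (h2 : ∀ i, conicFun (v i) c' = 0) :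
    ∃ l : K, c' = l • c := by
  classical
  have hcr : ∀ a b, a ≠ b → cross (v a) (v b) ≠ 0 := fun a b hab =>
    cross_ne_zero (hne a) (hne b) (hd a b hab)
  have key : ∀ a b m, a ≠ b → a ≠ m → b ≠ m → dot3 (cross (v a) (v b)) (v m) ≠ 0 := by
    intro a b m hab ham hbm h
    exact hcol a b m hab ham hbm
      ⟨cross (v a) (v b), hcr a b hab, dot3_cross_left _ _, dot3_cross_right _ _, h⟩
  set Φ : (Fin 6 → K) →ₗ[K] (Fin 5 → K) := LinearMap.pi (fun i => conicFun (v i)) with hΦ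
  have single_mem : ∀ (a b d e m : Fin 5),
      (∀ i : Fin 5, i = a ∨ i = b ∨ i = d ∨ i = e ∨ i = m) →
      a ≠ b → a ≠ m → b ≠ m → d ≠ e → d ≠ m → e ≠ m →
      (Pi.single m 1 : Fin 5 → K) ∈ LinearMap.range Φ := by
    intro a b d e m hall hab ham hbm hde hdm hem
    set f := cross (v a) (v b)
    set g := cross (v d) (v e)
    set u := conicMul f g with hu
    set lam := dot3 f (v m) * dot3 g (v m) with hlam
    have hlamne : lam ≠ 0 := mul_ne_zero (key a b m hab ham hbm) (key d e m hde hdm hem)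
    have hval : Φ u = lam • (Pi.single m 1 : Fin 5 → K) := by
      funext i
      have hΦi : Φ u i = dot3 f (v i) * dot3 g (v i) := by
        simp only [hΦ, LinearMap.pi_apply]; exact conicFun_conicMul f g (v i)
      rcases hall i with rfl | rfl | rfl | rfl | rfl
      · rw [hΦi]
        simp [f, dot3_cross_left, Pi.single_apply, Ne.symm ham]
      · rw [hΦi]
        simp [f, dot3_cross_right, Pi.single_apply, Ne.symm hbm]
      · rw [hΦi]
        simp [g, dot3_cross_left, Pi.single_apply, Ne.symm hdm]
      · rw [hΦi]
        simp [g, dot3_cross_right, Pi.single_apply, Ne.symm hem]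
      · rw [hΦi]
        simp [Pi.single_apply, hlam]
    refine ⟨lam⁻¹ • u, ?_⟩
    rw [map_smul, hval, smul_smul, inv_mul_cancel₀ hlamne, one_smul]
  have hsingles : ∀ m : Fin 5, (Pi.single m 1 : Fin 5 → K) ∈ LinearMap.range Φ := by
    intro m
    fin_cases m
    · exact single_mem 1 2 3 4 0 (by decide) (by decide) (by decide) (by decide) (by decide)
        (by decide) (by decide)
    · exact single_mem 0 2 3 4 1 (by decide) (by decide) (by decide) (by decide) (by decide)
        (by decide) (by decide)
    · exact single_mem 0 1 3 4 2 (by decide) (by decide) (by decide) (by decide) (by decide)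
        (by decide) (by decide)
    · exact single_mem 0 1 2 4 3 (by decide) (by decide) (by decide) (by decide) (by decide)
        (by decide) (by decide)
    · exact single_mem 0 1 2 3 4 (by decide) (by decide) (by decide) (by decide) (by decide)
        (by decide) (by decide)
  have hrange : LinearMap.range Φ = ⊤ := by
    rw [Submodule.eq_top_iff']
    intro w
    have hw : w = ∑ i : Fin 5, w i • (Pi.single i 1 : Fin 5 → K) := by
      funext j
      simp [Pi.single_apply, Finset.sum_ite_eq, mul_comm]
    rw [hw]
    exact Submodule.sum_mem _ fun i _ => Submodule.smul_mem _ _ (hsingles i)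
  have hker : Module.finrank K (LinearMap.ker Φ) = 1 := by
    have := LinearMap.finrank_range_add_finrank_ker Φ
    rw [hrange, finrank_top] at this
    rw [Module.finrank_fintype_fun_eq_card, Module.finrank_fintype_fun_eq_card] at this
    simp at this
    omega
  have hcker : c ∈ LinearMap.ker Φ := by
    rw [LinearMap.mem_ker]; funext i; exact h1 i
  have hc'ker : c' ∈ LinearMap.ker Φ := by
    rw [LinearMap.mem_ker]; funext i; exact h2 i
  have hcne : (⟨c, hcker⟩ : LinearMap.ker Φ) ≠ 0 := by
    intro h
    exact hc0 (congrArg Subtype.val h)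
  obtain ⟨l, hl⟩ := (finrank_eq_one_iff_of_nonzero' (⟨c, hcker⟩ : LinearMap.ker Φ) hcne).mp
    hker ⟨c', hc'ker⟩
  exact ⟨l, (congrArg Subtype.val hl).symm⟩

section Galois

variable {k : Type*} [Field k] [Algebra k K]

def mapv (σ : K ≃ₐ[k] K) (v : Fin 3 → K) : Fin 3 → K := fun m => σ (v m)

lemma mapv_cross (σ : K ≃ₐ[k] K) (a b : Fin 3 → K) :
    cross (mapv σ a) (mapv σ b) = mapv σ (cross a b) := by
  funext m; fin_cases m <;> simp [cross, mapv, map_sub, map_mul]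

lemma mapv_dot3 (σ : K ≃ₐ[k] K) (F v : Fin 3 → K) :
    dot3 (mapv σ F) (mapv σ v) = σ (dot3 F v) := by
  simp [dot3, mapv, map_add, map_mul]

lemma mapv_mapv_symm (σ : K ≃ₐ[k] K) (v : Fin 3 → K) : mapv σ.symm (mapv σ v) = v := by
  funext m; simp [mapv]

lemma mapv_projEq (σ : K ≃ₐ[k] K) {a b : Fin 3 → K} (h : ProjEq3 a b) :
    ProjEq3 (mapv σ a) (mapv σ b) := by
  obtain ⟨c, hc, rfl⟩ := h
  refine ⟨σ c, fun h0 => hc (by simpa using (map_eq_zero_iff σ σ.injective).mp h0), ?_⟩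
  funext m; simp [mapv, map_mul]

lemma projEq3_target {n : ℕ} (w : Fin n → Fin 3 → K)
    (hd : ∀ i j, i ≠ j → ¬ ProjEq3 (w i) (w j)) {x : Fin 3 → K} {j j' : Fin n}
    (h1 : ProjEq3 x (w j)) (h2 : ProjEq3 x (w j')) : j = j' := by
  by_contra hne
  exact hd j j' hne (projEq3_trans (projEq3_symm h1) h2)

lemma inverse_pair {n : ℕ} (w : Fin n → Fin 3 → K) (σ : K ≃ₐ[k] K) (π : Equiv.Perm (Fin n))
    (hπ : ∀ i, ProjEq3 (mapv σ (w i)) (w (π i))) (i : Fin n) :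
    ProjEq3 (mapv σ.symm (w i)) (w (π.symm i)) := by
  have := mapv_projEq σ.symm (hπ (π.symm i))
  rw [mapv_mapv_symm] at this
  simpa using projEq3_symm this

end Galois

section Main

variable {k : Type*} [Field k] [Algebra k K]

/-- No three of the five points of the 5-orbit are collinear. -/
theorem no_three_p_collinear (p : Fin 5 → Fin 3 → K)
    (hpne : ∀ i, p i ≠ 0)
    (hpdist : ∀ i j, i ≠ j → ¬ ProjEq3 (p i) (p j))
    (hpstab : ∀ σ : K ≃ₐ[k] K, ∃ π : Equiv.Perm (Fin 5), ∀ i, ProjEq3 (mapv σ (p i)) (p (π i)))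
    (hptrans : ∀ i j, ∃ σ : K ≃ₐ[k] K, ProjEq3 (mapv σ (p i)) (p j))
    (hpnotall : ¬ ∃ F : Fin 3 → K, F ≠ 0 ∧ ∀ i, dot3 F (p i) = 0) :
    ∀ i j l, i ≠ j → i ≠ l → j ≠ l → dot3 (cross (p i) (p j)) (p l) ≠ 0 := by
  classical
  intro i0 j0 l0 hij0 hil0 hjl0 hcol0
  have hcr : ∀ a b, a ≠ b → cross (p a) (p b) ≠ 0 := fun a b hab =>
    cross_ne_zero (hpne a) (hpne b) (hpdist a b hab)
  set S : Fin 5 → Fin 5 → Finset (Fin 5) :=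
    fun i j => Finset.univ.filter (fun l => dot3 (cross (p i) (p j)) (p l) = 0) with hS
  have memS : ∀ i j l, l ∈ S i j ↔ dot3 (cross (p i) (p j)) (p l) = 0 := by
    intro i j l; simp [hS]
  have memS_left : ∀ i j, i ∈ S i j := fun i j => (memS i j i).mpr (dot3_cross_left _ _)
  have memS_right : ∀ i j, j ∈ S i j := fun i j => (memS i j j).mpr (dot3_cross_right _ _)
  -- exchange property
  have exchange : ∀ i j a b, i ≠ j → a ≠ b → a ∈ S i j → b ∈ S i j → S a b = S i j := by
    intro i j a b hij hab ha hb
    obtain ⟨l, hl⟩ := line_unique (hcr a b hab) ((memS i j a).mp ha) ((memS i j b).mp hb)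
    have hlne : l ≠ 0 := by
      rintro rfl
      rw [zero_smul] at hl
      exact hcr i j hij hl
    ext x
    rw [memS, memS, hl, dot3_smul_left, mul_eq_zero]
    constructor
    · intro h; exact Or.inr h
    · rintro (h | h)
      · exact absurd h hlne
      · exact h
  have notall : ∀ i j, i ≠ j → S i j ≠ Finset.univ := by
    intro i j hij h
    refine hpnotall ⟨cross (p i) (p j), hcr i j hij, fun l => ?_⟩
    have : l ∈ S i j := h ▸ Finset.mem_univ l
    exact (memS i j l).mp this
  have cardle : ∀ i j, i ≠ j → (S i j).card ≤ 4 := by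
    intro i j hij
    have h1 : (S i j).card ≤ 5 := by
      have := Finset.card_le_card (Finset.subset_univ (S i j))
      simpa using this
    rcases Nat.lt_or_ge (S i j).card 5 with h | h
    · omega
    · exfalso
      have : S i j = Finset.univ := Finset.eq_of_subset_of_card_le (Finset.subset_univ _)
        (by simpa using h)
      exact notall i j hij this
  -- transport of incidences
  have htrans : ∀ (σ : K ≃ₐ[k] K) (π : Equiv.Perm (Fin 5)),
      (∀ i, ProjEq3 (mapv σ (p i)) (p (π i))) →
      ∀ i j l, dot3 (cross (p i) (p j)) (p l) = 0 →
        dot3 (cross (p (π i)) (p (π j))) (p (π l)) = 0 := by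
    intro σ π hπ i j l h
    have h' : dot3 (cross (mapv σ (p i)) (mapv σ (p j))) (mapv σ (p l)) = 0 := by
      rw [mapv_cross, mapv_dot3, h, map_zero]
    exact onL_transport (hπ i) (hπ j) (hπ l) h'
  have himg : ∀ (σ : K ≃ₐ[k] K) (π : Equiv.Perm (Fin 5)),
      (∀ i, ProjEq3 (mapv σ (p i)) (p (π i))) →
      ∀ i j, (S i j).image π = S (π i) (π j) := by
    intro σ π hπ i j
    ext x
    simp only [Finset.mem_image]
    constructor
    · rintro ⟨y, hy, rfl⟩
      exact (memS _ _ _).mpr (htrans σ π hπ i j y ((memS i j y).mp hy))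
    · intro hx
      refine ⟨π.symm x, ?_, by simp⟩
      have h' := htrans σ.symm π.symm (inverse_pair p σ π hπ) (π i) (π j) x
        ((memS _ _ _).mp hx)
      simpa using (memS i j (π.symm x)).mpr (by simpa using h')
  -- the permutation associated to a transitivity element sends m to m'
  have hperm_target : ∀ (m m' : Fin 5), ∃ (σ : K ≃ₐ[k] K) (π : Equiv.Perm (Fin 5)),
      (∀ i, ProjEq3 (mapv σ (p i)) (p (π i))) ∧ π m = m' := by
    intro m m'
    obtain ⟨σ, hσ⟩ := hptrans m m'
    obtain ⟨π, hπ⟩ := hpstab σ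
    exact ⟨σ, π, hπ, projEq3_target p hpdist (hπ m) hσ⟩
  by_cases h4 : ∃ i j, i ≠ j ∧ (S i j).card = 4
  · -- some four points are collinear; the remaining point would be Galois-stable
    set U : Fin 5 → Prop := fun m => ∃ i j, i ≠ j ∧ S i j = Finset.univ.erase m with hU
    have hU_unique : ∀ m m', U m → U m' → m = m' := by
      rintro m m' ⟨i, j, hij, hSij⟩ ⟨i', j', hij', hSij'⟩
      by_contra hmm
      have hcard : 2 ≤ ((Finset.univ.erase m) ∩ (Finset.univ.erase m')).card := by
        have h1 : ((Finset.univ.erase m) ∪ (Finset.univ.erase m')).card ≤ 5 := by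
          have := Finset.card_le_card (Finset.subset_univ
            ((Finset.univ.erase m) ∪ (Finset.univ.erase m')))
          simpa using this
        have h2 := Finset.card_inter_add_card_union (Finset.univ.erase m)
          (Finset.univ.erase m')
        have h3 : (Finset.univ.erase m).card = 4 := by simp [Finset.card_erase_of_mem]
        have h4' : (Finset.univ.erase m').card = 4 := by simp [Finset.card_erase_of_mem]
        omega
      obtain ⟨a, ha, b, hb, hab⟩ := Finset.one_lt_card.mp hcard
      rw [Finset.mem_inter] at ha hb
      have e1 : S a b = S i j := exchange i j a b hij hab (hSij ▸ ha.1) (hSij ▸ hb.1)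
      have e2 : S a b = S i' j' := exchange i' j' a b hij' hab (hSij' ▸ ha.2) (hSij' ▸ hb.2)
      have : Finset.univ.erase m = Finset.univ.erase m' := by
        rw [← hSij, ← e1, e2, hSij']
      have hm' : m' ∈ Finset.univ.erase m := Finset.mem_erase.mpr ⟨Ne.symm hmm, Finset.mem_univ _⟩
      rw [this] at hm'
      exact (Finset.mem_erase.mp hm').1 rfl
    obtain ⟨i, j, hij, hc4⟩ := h4
    have hmex : ∃ m, S i j = Finset.univ.erase m := by
      have hcompl : (S i j)ᶜ.card = 1 := by
        rw [Finset.card_compl, hc4]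
        rfl
      obtain ⟨m, hm⟩ := Finset.card_eq_one.mp hcompl
      refine ⟨m, ?_⟩
      have h2 := congrArg (fun t => tᶜ) hm
      simpa [Finset.compl_singleton] using h2
    obtain ⟨m, hm⟩ := hmex
    have hUm : U m := ⟨i, j, hij, hm⟩
    have hUtrans : ∀ (σ : K ≃ₐ[k] K) (π : Equiv.Perm (Fin 5)),
        (∀ i, ProjEq3 (mapv σ (p i)) (p (π i))) → ∀ m, U m → U (π m) := by
      rintro σ π hπ m ⟨i, j, hij, hSij⟩
      refine ⟨π i, π j, fun h => hij (π.injective h), ?_⟩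
      rw [← himg σ π hπ, hSij, Finset.image_erase π.injective, Finset.image_univ_equiv]
    have hfix : ∀ m', m' ≠ m → False := by
      intro m' hne
      obtain ⟨σ, π, hπ, hπm⟩ := hperm_target m m'
      have hU' := hUtrans σ π hπ m hUm
      rw [hπm] at hU'
      exact hne (hU_unique m' m hU' hUm)
    rcases eq_or_ne m 0 with rfl | hne
    · exact hfix 1 (by decide)
    · exact hfix 0 (Ne.symm hne)
  · push_neg at h4
    have card3 : ∀ i j, i ≠ j → 3 ≤ (S i j).card → (S i j).card = 3 := by
      intro i j hij h3
      have h1 := cardle i j hij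
      have h2 := h4 i j hij
      omega
    set Good : Finset (Fin 5 × Fin 5) :=
      Finset.univ.filter (fun x => x.1 ≠ x.2 ∧ 3 ≤ (S x.1 x.2).card) with hGood
    set Lines : Finset (Finset (Fin 5)) := Good.image (fun x => S x.1 x.2) with hLines
    have hmemLines : ∀ i j, i ≠ j → 3 ≤ (S i j).card → S i j ∈ Lines := by
      intro i j hij h3
      rw [hLines, Finset.mem_image]
      exact ⟨(i, j), by rw [hGood, Finset.mem_filter]; exact ⟨Finset.mem_univ _, hij, h3⟩, rfl⟩
    have hline_card : ∀ s ∈ Lines, s.card = 3 := by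
      intro s hs
      rw [hLines, Finset.mem_image] at hs
      obtain ⟨x, hx, rfl⟩ := hs
      rw [hGood, Finset.mem_filter] at hx
      exact card3 x.1 x.2 hx.2.1 hx.2.2
    have h3card : 3 ≤ (S i0 j0).card := by
      have h3sub : ({i0, j0, l0} : Finset (Fin 5)) ⊆ S i0 j0 := by
        intro x hx
        simp only [Finset.mem_insert, Finset.mem_singleton] at hx
        rcases hx with rfl | rfl | rfl
        · exact memS_left _ _
        · exact memS_right _ _
        · exact (memS _ _ _).mpr hcol0
      refine le_trans ?_ (Finset.card_le_card h3sub)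
      rw [Finset.card_insert_of_notMem (by simp [hij0, hil0]),
        Finset.card_insert_of_notMem (by simp [hjl0]), Finset.card_singleton]
    have hmem0 : S i0 j0 ∈ Lines := hmemLines i0 j0 hij0 h3card
    -- two lines sharing two points coincide
    have hshare : ∀ s s', s ∈ Lines → s' ∈ Lines → ∀ a b, a ≠ b →
        a ∈ s → b ∈ s → a ∈ s' → b ∈ s' → s = s' := by
      intro s s' hs hs' a b hab has hbs has' hbs'
      rw [hLines, Finset.mem_image] at hs hs'
      obtain ⟨x, hx, rfl⟩ := hs
      obtain ⟨x', hx', rfl⟩ := hs'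
      rw [hGood, Finset.mem_filter] at hx hx'
      rw [← exchange x.1 x.2 a b hx.2.1 hab has hbs,
        ← exchange x'.1 x'.2 a b hx'.2.1 hab has' hbs']
    -- frequencies are constant by transitivity
    set freq : Fin 5 → ℕ := fun m => (Lines.filter (fun s => m ∈ s)).card with hfreq
    have hLstab : ∀ (σ : K ≃ₐ[k] K) (π : Equiv.Perm (Fin 5)),
        (∀ i, ProjEq3 (mapv σ (p i)) (p (π i))) →
        ∀ s ∈ Lines, s.image π ∈ Lines := by
      intro σ π hπ s hs
      rw [hLines, Finset.mem_image] at hs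
      obtain ⟨x, hx, rfl⟩ := hs
      rw [hGood, Finset.mem_filter] at hx
      rw [himg σ π hπ]
      refine hmemLines _ _ (fun h => hx.2.1 (π.injective h)) ?_
      rw [← himg σ π hπ, Finset.card_image_of_injective _ π.injective]
      exact hx.2.2
    have hfreq_eq : ∀ m m', freq m = freq m' := by
      intro m m'
      obtain ⟨σ, π, hπ, hπm⟩ := hperm_target m m'
      rw [hfreq]
      apply Finset.card_bij (fun s _ => s.image π)
      · intro s hs
        rw [Finset.mem_filter] at hs ⊢
        exact ⟨hLstab σ π hπ s hs.1, hπm ▸ Finset.mem_image_of_mem π hs.2⟩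
      · intro s hs t ht h
        exact Finset.image_injective π.injective h
      · intro s hs
        rw [Finset.mem_filter] at hs
        refine ⟨s.image π.symm, Finset.mem_filter.mpr ⟨?_, ?_⟩, ?_⟩
        · exact hLstab σ.symm π.symm (inverse_pair p σ π hπ) s hs.1
        · rw [Finset.mem_image]
          exact ⟨m', hs.2, by rw [← hπm]; simp⟩
        · ext x
          simp only [Finset.mem_image]
          constructor
          · rintro ⟨y, ⟨z, hz, rfl⟩, rfl⟩
            simpa using hz
          · intro hx
            exact ⟨π.symm x, ⟨x, hx, rfl⟩, by simp⟩
    -- double counting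
    have hsum : ∑ s ∈ Lines, s.card = ∑ m : Fin 5, freq m := by
      have h1 : ∀ s : Finset (Fin 5), s.card = ∑ m : Fin 5, if m ∈ s then 1 else 0 := by
        intro s
        conv_lhs => rw [← Finset.filter_univ_mem s]
        rw [Finset.card_filter]
      calc ∑ s ∈ Lines, s.card = ∑ s ∈ Lines, ∑ m : Fin 5, if m ∈ s then 1 else 0 :=
            Finset.sum_congr rfl (fun s _ => h1 s)
        _ = ∑ m : Fin 5, ∑ s ∈ Lines, if m ∈ s then 1 else 0 := Finset.sum_comm
        _ = ∑ m : Fin 5, freq m := by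
            exact Finset.sum_congr rfl (fun m _ => (Finset.card_filter _ _).symm)
    have hsum3 : ∑ s ∈ Lines, s.card = 3 * Lines.card := by
      rw [Finset.sum_congr rfl hline_card, Finset.sum_const, smul_eq_mul, mul_comm]
    have hsum5 : ∑ m : Fin 5, freq m = 5 * freq 0 := by
      rw [Finset.sum_congr rfl (fun m _ => hfreq_eq m 0), Finset.sum_const]
      simp [mul_comm]
    have hfreq1 : 1 ≤ freq i0 := by
      rw [hfreq]
      refine Finset.card_pos.mpr ⟨S i0 j0, Finset.mem_filter.mpr ⟨hmem0, memS_left i0 j0⟩⟩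
    -- disjointness bound
    have hdisj : ∀ x ∈ Lines, ∀ y ∈ Lines, x ≠ y → Disjoint x.offDiag y.offDiag := by
      intro x hx y hy hxy
      rw [Finset.disjoint_left]
      intro a ha ha'
      rw [Finset.mem_offDiag] at ha ha'
      exact hxy (hshare x y hx hy a.1 a.2 ha.2.2 ha.1 ha.2.1 ha'.1 ha'.2.1)
    have hbound : 6 * Lines.card ≤ 20 := by
      have hb1 : (Lines.biUnion (fun s => s.offDiag)).card = ∑ s ∈ Lines, s.offDiag.card :=
        Finset.card_biUnion hdisj
      have hb2 : ∑ s ∈ Lines, s.offDiag.card = 6 * Lines.card := by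
        rw [Finset.sum_congr rfl (fun s hs => by rw [Finset.offDiag_card, hline_card s hs]),
          Finset.sum_const, smul_eq_mul, mul_comm]
      have hb3 : Lines.biUnion (fun s => s.offDiag) ⊆ (Finset.univ : Finset (Fin 5)).offDiag := by
        intro a ha
        rw [Finset.mem_biUnion] at ha
        obtain ⟨s, hs, ha⟩ := ha
        rw [Finset.mem_offDiag] at ha ⊢
        exact ⟨Finset.mem_univ _, Finset.mem_univ _, ha.2.2⟩
      have hb4 := Finset.card_le_card hb3
      rw [hb1, hb2] at hb4
      have hb5 : (Finset.univ : Finset (Fin 5)).offDiag.card = 20 := by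
        rw [Finset.offDiag_card]
        rfl
      omega
    have hfreqi0 := hfreq_eq i0 0
    omega

lemma dot3_cross_swap (a b v : Fin 3 → K) : dot3 (cross b a) v = - dot3 (cross a b) v := by
  simp [dot3, cross]; ring

/-- No point of the 5-orbit is projectively equal to a point of the 2-orbit. -/
theorem p_ne_q (p : Fin 5 → Fin 3 → K) (q : Fin 2 → Fin 3 → K)
    (hpdist : ∀ i j, i ≠ j → ¬ ProjEq3 (p i) (p j))
    (hptrans : ∀ i j, ∃ σ : K ≃ₐ[k] K, ProjEq3 (mapv σ (p i)) (p j))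
    (hqstab : ∀ σ : K ≃ₐ[k] K, ∃ ρ : Equiv.Perm (Fin 2), ∀ a, ProjEq3 (mapv σ (q a)) (q (ρ a))) :
    ∀ i a, ¬ ProjEq3 (p i) (q a) := by
  intro i a h
  have f : ∀ j, ∃ b, ProjEq3 (p j) (q b) := by
    intro j
    obtain ⟨σ, hσ⟩ := hptrans i j
    obtain ⟨ρ, hρ⟩ := hqstab σ
    exact ⟨ρ a, projEq3_trans (projEq3_symm hσ)
      (projEq3_trans (mapv_projEq σ h) (hρ a))⟩
  obtain ⟨b0, h0⟩ := f 0
  obtain ⟨b1, h1⟩ := f 1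
  obtain ⟨b2, h2⟩ := f 2
  fin_cases b0 <;> fin_cases b1 <;> fin_cases b2 <;>
    first
    | exact hpdist 0 1 (by decide) (projEq3_trans h0 (projEq3_symm h1))
    | exact hpdist 0 2 (by decide) (projEq3_trans h0 (projEq3_symm h2))
    | exact hpdist 1 2 (by decide) (projEq3_trans h1 (projEq3_symm h2))

/-- The line through the two points of the 2-orbit misses the 5-orbit. -/
theorem no_qq_p_collinear (p : Fin 5 → Fin 3 → K) (q : Fin 2 → Fin 3 → K)
    (hpdist : ∀ i j, i ≠ j → ¬ ProjEq3 (p i) (p j))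
    (hptrans : ∀ i j, ∃ σ : K ≃ₐ[k] K, ProjEq3 (mapv σ (p i)) (p j))
    (hpnotall : ¬ ∃ F : Fin 3 → K, F ≠ 0 ∧ ∀ i, dot3 F (p i) = 0)
    (hqne : ∀ a, q a ≠ 0)
    (hqdist : ∀ a b, a ≠ b → ¬ ProjEq3 (q a) (q b))
    (hstab : ∀ σ : K ≃ₐ[k] K, ∃ (π : Equiv.Perm (Fin 5)) (ρ : Equiv.Perm (Fin 2)),
      (∀ i, ProjEq3 (mapv σ (p i)) (p (π i))) ∧ (∀ a, ProjEq3 (mapv σ (q a)) (q (ρ a)))) :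
    ∀ a b i, a ≠ b → dot3 (cross (q a) (q b)) (p i) ≠ 0 := by
  intro a b i0 hab h0
  refine hpnotall ⟨cross (q a) (q b),
    cross_ne_zero (hqne a) (hqne b) (hqdist a b hab), fun j => ?_⟩
  obtain ⟨σ, hσ⟩ := hptrans i0 j
  obtain ⟨π, ρ, hπ, hρ⟩ := hstab σ
  have hπi : π i0 = j := projEq3_target p hpdist (hπ i0) hσ
  have h1 : dot3 (cross (q (ρ a)) (q (ρ b))) (p (π i0)) = 0 := by
    apply onL_transport (hρ a) (hρ b) (hπ i0)
    rw [mapv_cross, mapv_dot3, h0, map_zero]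
  rw [hπi] at h1
  have hρab : ρ a ≠ ρ b := fun h => hab (ρ.injective h)
  rcases (by decide : ∀ a b x y : Fin 2, a ≠ b → x ≠ y →
      (x = a ∧ y = b) ∨ (x = b ∧ y = a)) a b (ρ a) (ρ b) hab hρab with ⟨h2, h3⟩ | ⟨h2, h3⟩
  · rwa [h2, h3] at h1
  · rw [h2, h3, dot3_cross_swap, neg_eq_zero] at h1
    exact h1

/-- No line through two points of the 5-orbit contains a point of the 2-orbit. -/
theorem no_pp_q_collinear (p : Fin 5 → Fin 3 → K) (q : Fin 2 → Fin 3 → K)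
    (hpne : ∀ i, p i ≠ 0)
    (hpdist : ∀ i j, i ≠ j → ¬ ProjEq3 (p i) (p j))
    (hptrans : ∀ i j, ∃ σ : K ≃ₐ[k] K, ProjEq3 (mapv σ (p i)) (p j))
    (hqne : ∀ a, q a ≠ 0)
    (hstab : ∀ σ : K ≃ₐ[k] K, ∃ (π : Equiv.Perm (Fin 5)) (ρ : Equiv.Perm (Fin 2)),
      (∀ i, ProjEq3 (mapv σ (p i)) (p (π i))) ∧ (∀ a, ProjEq3 (mapv σ (q a)) (q (ρ a))))
    (hA : ∀ i j l, i ≠ j → i ≠ l → j ≠ l → dot3 (cross (p i) (p j)) (p l) ≠ 0)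
    (hpq : ∀ i a, ¬ ProjEq3 (p i) (q a)) :
    ∀ i j a, i ≠ j → dot3 (cross (p i) (p j)) (q a) ≠ 0 := by
  classical
  intro i0 j0 a0 hij0 h0
  have hcr : ∀ a b, a ≠ b → cross (p a) (p b) ≠ 0 := fun a b hab =>
    cross_ne_zero (hpne a) (hpne b) (hpdist a b hab)
  have hcrq : ∀ i a, cross (p i) (q a) ≠ 0 := fun i a =>
    cross_ne_zero (hpne i) (hqne a) (hpq i a)
  set T : Finset (Fin 5 × Fin 5 × Fin 2) :=
    Finset.univ.filter
      (fun x => x.1 ≠ x.2.1 ∧ dot3 (cross (p x.1) (p x.2.1)) (q x.2.2) = 0) with hT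
  have memT : ∀ i j a, (i, j, a) ∈ T ↔ i ≠ j ∧ dot3 (cross (p i) (p j)) (q a) = 0 := by
    intro i j a; simp [hT]
  -- all points indexed by a pair in `T` lie on the line through `p x.1` and `q a`
  have honline : ∀ i j a, (i, j, a) ∈ T →
      ∀ x, x = i ∨ x = j → dot3 (cross (p i) (q a)) (p x) = 0 := by
    intro i j a hmem x hx
    obtain ⟨hij, hd⟩ := (memT i j a).mp hmem
    obtain ⟨l, hl⟩ := line_unique (hcrq i a) (dot3_cross_left (p i) (p j)) hd
    have hlne : l ≠ 0 := by
      rintro rfl; rw [zero_smul] at hl; exact hcr i j hij hl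
    rcases hx with rfl | rfl
    · exact dot3_cross_left _ _
    · have := dot3_cross_right (p i) (p x)
      rw [hl, dot3_smul_left] at this
      exact (mul_eq_zero.mp this).resolve_left hlne
  -- two triples with the same `a` sharing an index have the same pair of indices
  have hsame : ∀ i j a i' j', (i, j, a) ∈ T → (i', j', a) ∈ T →
      ∀ t, (t = i ∨ t = j) → (t = i' ∨ t = j') →
      ({i, j} : Finset (Fin 5)) = {i', j'} := by
    intro i j a i' j' h1 h2 t ht1 ht2
    obtain ⟨hij, hd⟩ := (memT i j a).mp h1
    obtain ⟨hij', hd'⟩ := (memT i' j' a).mp h2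
    -- all of i, j, i', j' lie on the line through p t and q a
    have hL : ∀ x, x = i ∨ x = j ∨ x = i' ∨ x = j' →
        dot3 (cross (p t) (q a)) (p x) = 0 := by
      have e1 : ∀ x, x = i ∨ x = j → dot3 (cross (p i) (q a)) (p x) = 0 := honline i j a h1
      have e2 : ∀ x, x = i' ∨ x = j' → dot3 (cross (p i') (q a)) (p x) = 0 :=
        honline i' j' a h2
      -- the line through p t, q a is proportional to both
      have f1 : dot3 (cross (p i) (q a)) (p t) = 0 := e1 t ht1
      have f2 : dot3 (cross (p i) (q a)) (q a) = 0 := dot3_cross_right _ _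
      obtain ⟨l1, hl1⟩ := line_unique (hcrq t a) f1 f2
      have hl1ne : l1 ≠ 0 := by
        rintro rfl; rw [zero_smul] at hl1; exact hcrq i a hl1
      have f1' : dot3 (cross (p i') (q a)) (p t) = 0 := e2 t ht2
      have f2' : dot3 (cross (p i') (q a)) (q a) = 0 := dot3_cross_right _ _
      obtain ⟨l2, hl2⟩ := line_unique (hcrq t a) f1' f2'
      have hl2ne : l2 ≠ 0 := by
        rintro rfl; rw [zero_smul] at hl2; exact hcrq i' a hl2
      intro x hx
      rcases hx with hx | hx | hx | hx
      · have := e1 x (Or.inl hx); rw [hl1, dot3_smul_left] at this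
        exact (mul_eq_zero.mp this).resolve_left hl1ne
      · have := e1 x (Or.inr hx); rw [hl1, dot3_smul_left] at this
        exact (mul_eq_zero.mp this).resolve_left hl1ne
      · have := e2 x (Or.inl hx); rw [hl2, dot3_smul_left] at this
        exact (mul_eq_zero.mp this).resolve_left hl2ne
      · have := e2 x (Or.inr hx); rw [hl2, dot3_smul_left] at this
        exact (mul_eq_zero.mp this).resolve_left hl2ne
    -- if some x is on the line and distinct from i, j, contradiction with hA
    by_contra hne
    have hsub : ¬ ({i', j'} : Finset (Fin 5)) ⊆ {i, j} := by
      intro hsub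
      apply hne
      apply (Finset.eq_of_subset_of_card_le hsub ?_).symm
      · rw [Finset.card_insert_of_notMem (by simp [hij]), Finset.card_singleton,
          Finset.card_insert_of_notMem (by simp [hij']), Finset.card_singleton]
    obtain ⟨x, hx1, hx2⟩ := Finset.not_subset.mp hsub
    simp only [Finset.mem_insert, Finset.mem_singleton] at hx1 hx2
    push_neg at hx2
    -- p i, p j, p x are collinear: they all lie on the line through p t, q a
    have gx : dot3 (cross (p t) (q a)) (p x) = 0 := by
      rcases hx1 with rfl | rfl
      · exact hL x (Or.inr (Or.inr (Or.inl rfl)))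
      · exact hL x (Or.inr (Or.inr (Or.inr rfl)))
    have gi : dot3 (cross (p t) (q a)) (p i) = 0 := hL i (Or.inl rfl)
    have gj : dot3 (cross (p t) (q a)) (p j) = 0 := hL j (Or.inr (Or.inl rfl))
    obtain ⟨l3, hl3⟩ := line_unique (hcr i j hij) gi gj
    have hl3ne : l3 ≠ 0 := by
      rintro rfl; rw [zero_smul] at hl3; exact hcrq t a hl3
    rw [hl3, dot3_smul_left] at gx
    exact hA i j x hij hx2.1.symm hx2.2.symm ((mul_eq_zero.mp gx).resolve_left hl3ne)
  -- `T` is nonempty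
  have hmem0 : (i0, j0, a0) ∈ T := (memT i0 j0 a0).mpr ⟨hij0, h0⟩
  -- transport
  have htrans' : ∀ (σ : K ≃ₐ[k] K) (π : Equiv.Perm (Fin 5)) (ρ : Equiv.Perm (Fin 2)),
      (∀ i, ProjEq3 (mapv σ (p i)) (p (π i))) → (∀ a, ProjEq3 (mapv σ (q a)) (q (ρ a))) →
      ∀ i j a, (i, j, a) ∈ T → (π i, π j, ρ a) ∈ T := by
    intro σ π ρ hπ hρ i j a hmem
    obtain ⟨hij, hd⟩ := (memT i j a).mp hmem
    refine (memT _ _ _).mpr ⟨fun h => hij (π.injective h), ?_⟩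
    apply onL_transport (hπ i) (hπ j) (hρ a)
    rw [mapv_cross, mapv_dot3, hd, map_zero]
  -- fibers over the first coordinate all have the same cardinality
  have hfib : ∀ m m', (T.filter (fun x => x.1 = m)).card =
      (T.filter (fun x => x.1 = m')).card := by
    intro m m'
    obtain ⟨σ, hσ⟩ := hptrans m m'
    obtain ⟨π, ρ, hπ, hρ⟩ := hstab σ
    have hπm : π m = m' := projEq3_target p hpdist (hπ m) hσ
    apply Finset.card_bij (fun x _ => (π x.1, π x.2.1, ρ x.2.2))
    · rintro ⟨i, j, a⟩ hx
      rw [Finset.mem_filter] at hx ⊢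
      obtain ⟨h1, h2⟩ := hx
      subst h2
      exact ⟨htrans' σ π ρ hπ hρ _ _ _ h1, hπm⟩
    · rintro ⟨i, j, a⟩ _ ⟨i', j', a'⟩ _ h
      simp only [Prod.mk.injEq] at h
      exact Prod.ext (π.injective h.1) (Prod.ext (π.injective h.2.1) (ρ.injective h.2.2))
    · rintro ⟨i, j, a⟩ hx
      rw [Finset.mem_filter] at hx
      obtain ⟨h1, h2⟩ := hx
      refine ⟨(π.symm i, π.symm j, ρ.symm a), ?_, ?_⟩
      · rw [Finset.mem_filter]
        constructor
        · have h3 := htrans' σ.symm π.symm ρ.symm (inverse_pair p σ π hπ)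
            (inverse_pair q σ ρ hρ) i j a h1
          exact h3
        · have h2' : i = m' := h2
          show π.symm i = m
          rw [h2', ← hπm, Equiv.symm_apply_apply]
      · simp [h2]
  -- symmetry of T in the first two coordinates
  have hsymm : ∀ i j a, (i, j, a) ∈ T → (j, i, a) ∈ T := by
    intro i j a h
    obtain ⟨hij, hd⟩ := (memT i j a).mp h
    refine (memT j i a).mpr ⟨Ne.symm hij, ?_⟩
    rw [dot3_cross_swap, hd, neg_zero]
  -- |T| = 5 t
  have hcount : T.card = ∑ m : Fin 5, (T.filter (fun x => x.1 = m)).card :=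
    Finset.card_eq_sum_card_fiberwise (fun x _ => Finset.mem_univ x.1)
  set t := (T.filter (fun x => x.1 = i0)).card with ht
  have hcard5 : T.card = 5 * t := by
    rw [hcount, Finset.sum_congr rfl (fun m _ => hfib m i0), Finset.sum_const]
    simp [mul_comm]
    exact ht.symm
  have ht1 : 1 ≤ t := by
    rw [ht]
    exact Finset.card_pos.mpr ⟨(i0, j0, a0), Finset.mem_filter.mpr ⟨hmem0, rfl⟩⟩
  -- slices of T by the q-index
  set Ta : Fin 2 → Finset (Fin 5 × Fin 5) := fun a =>
    Finset.univ.filter (fun x : Fin 5 × Fin 5 => (x.1, x.2, a) ∈ T) with hTa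
  have memTa : ∀ a i j, (i, j) ∈ Ta a ↔ (i, j, a) ∈ T := by
    intro a i j; simp [hTa]
  have hTcard : T.card = ∑ a : Fin 2, (Ta a).card := by
    rw [Finset.card_eq_sum_card_fiberwise (f := fun x => x.2.2) (t := Finset.univ)
      (fun x _ => Finset.mem_univ _)]
    refine Finset.sum_congr rfl (fun a _ => ?_)
    apply Finset.card_bij (fun x _ => (x.1, x.2.1))
    · rintro ⟨i, j, b⟩ hx
      rw [Finset.mem_filter] at hx
      obtain ⟨h1, h2⟩ := hx
      have h2' : b = a := h2
      subst h2'
      exact (memTa b i j).mpr h1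
    · rintro ⟨i, j, b⟩ hb ⟨i', j', b'⟩ hb' h
      rw [Finset.mem_filter] at hb hb'
      have e1 : b = a := hb.2
      have e2 : b' = a := hb'.2
      simp only [Prod.mk.injEq] at h
      subst e1; subst e2
      exact Prod.ext h.1 (Prod.ext h.2 rfl)
    · rintro ⟨i, j⟩ hx
      exact ⟨(i, j, a), Finset.mem_filter.mpr ⟨(memTa a i j).mp hx, rfl⟩, rfl⟩
  -- each slice has even cardinality at most 4
  have hslice : ∀ a, ∃ u, (Ta a).card = 2 * u ∧ u ≤ 2 := by
    intro a
    set img := (Ta a).image (fun x : Fin 5 × Fin 5 => ({x.1, x.2} : Finset (Fin 5))) with himg2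
    refine ⟨img.card, ?_, ?_⟩
    · -- every fiber of the pairing map has exactly two elements
      rw [Finset.card_eq_sum_card_fiberwise
        (f := fun x : Fin 5 × Fin 5 => ({x.1, x.2} : Finset (Fin 5))) (t := img)
        (fun x hx => Finset.mem_image_of_mem _ hx)]
      rw [Finset.sum_congr rfl ?_, Finset.sum_const, smul_eq_mul, mul_comm]
      intro b hb
      rw [himg2, Finset.mem_image] at hb
      obtain ⟨⟨yi, yj⟩, hy, rfl⟩ := hb
      have hyij : yi ≠ yj := ((memT _ _ _).mp ((memTa a yi yj).mp hy)).1
      have : (Ta a).filter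
          (fun x : Fin 5 × Fin 5 => ({x.1, x.2} : Finset (Fin 5)) = {yi, yj}) =
          {(yi, yj), (yj, yi)} := by
        ext ⟨x1, x2⟩
        rw [Finset.mem_filter]
        simp only [Finset.mem_insert, Finset.mem_singleton, Prod.mk.injEq]
        constructor
        · rintro ⟨hmem, hpair⟩
          have hx12 : x1 ≠ x2 := ((memT _ _ _).mp ((memTa a x1 x2).mp hmem)).1
          have m1 : x1 = yi ∨ x1 = yj := by
            have : x1 ∈ ({yi, yj} : Finset (Fin 5)) := by
              rw [← hpair]; simp
            simpa using this
          have m2 : x2 = yi ∨ x2 = yj := by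
            have : x2 ∈ ({yi, yj} : Finset (Fin 5)) := by
              rw [← hpair]; simp
            simpa using this
          rcases m1 with rfl | rfl <;> rcases m2 with rfl | rfl
          · exact absurd rfl hx12
          · exact Or.inl ⟨rfl, rfl⟩
          · exact Or.inr ⟨rfl, rfl⟩
          · exact absurd rfl hx12
        · rintro (⟨rfl, rfl⟩ | ⟨rfl, rfl⟩)
          · exact ⟨hy, rfl⟩
          · refine ⟨(memTa a x1 x2).mpr (hsymm _ _ _ ((memTa a x2 x1).mp hy)), ?_⟩
            exact Finset.pair_comm x1 x2
      rw [this]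
      rw [Finset.card_insert_of_notMem (by simp [hyij]), Finset.card_singleton]
    · -- distinct pairs in the image are disjoint, and live in Fin 5
      by_contra hgt
      push_neg at hgt
      have h3 : 3 ≤ img.card := hgt
      -- any two distinct elements of img are disjoint 2-element sets
      have hdisj : ∀ s ∈ img, ∀ s' ∈ img, s ≠ s' → Disjoint s s' := by
        intro s hs s' hs' hne
        rw [himg2, Finset.mem_image] at hs hs'
        obtain ⟨⟨yi, yj⟩, hy, rfl⟩ := hs
        obtain ⟨⟨zi, zj⟩, hz, rfl⟩ := hs'
        rw [Finset.disjoint_left]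
        intro x hx hx'
        simp only [Finset.mem_insert, Finset.mem_singleton] at hx hx'
        exact hne (hsame yi yj a zi zj ((memTa a yi yj).mp hy) ((memTa a zi zj).mp hz)
          x hx hx')
      have hcard2 : ∀ s ∈ img, s.card = 2 := by
        intro s hs
        rw [himg2, Finset.mem_image] at hs
        obtain ⟨⟨yi, yj⟩, hy, rfl⟩ := hs
        have hyij : yi ≠ yj := ((memT _ _ _).mp ((memTa a yi yj).mp hy)).1
        rw [Finset.card_insert_of_notMem (by simp [hyij]), Finset.card_singleton]
      have hb1 : (img.biUnion id).card = ∑ s ∈ img, (id s).card :=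
        Finset.card_biUnion hdisj
      have hb2 : ∑ s ∈ img, (id s).card = 2 * img.card := by
        calc ∑ s ∈ img, (id s).card = ∑ _s ∈ img, 2 :=
              Finset.sum_congr rfl (fun s hs => hcard2 s hs)
          _ = 2 * img.card := by rw [Finset.sum_const, smul_eq_mul, mul_comm]
      have hb3 : (img.biUnion id).card ≤ 5 := by
        have := Finset.card_le_card (Finset.subset_univ (img.biUnion id))
        simpa using this
      omega
  obtain ⟨u0, hu0, hu0le⟩ := hslice 0
  obtain ⟨u1, hu1, hu1le⟩ := hslice 1
  have : T.card = (Ta 0).card + (Ta 1).card := by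
    rw [hTcard, Fin.sum_univ_two]
  omega

lemma dotMap_ne_zero {F : Fin 3 → K} (h : F ≠ 0) : dotMap F ≠ 0 := by
  intro h0
  apply h
  funext m
  have := congrFun (congrArg DFunLike.coe h0) (Pi.single m 1)
  simp only [dotMap_apply, LinearMap.zero_apply] at this
  rw [show F m = dot3 F (Pi.single m 1) from ?_]
  · exact this
  · fin_cases m <;> simp [dot3, Pi.single_apply]

lemma collinear_to_onL {a b v F : Fin 3 → K} (ha : a ≠ 0) (hb : b ≠ 0)
    (hab : ¬ ProjEq3 a b) (hF : F ≠ 0) (h1 : dot3 F a = 0) (h2 : dot3 F b = 0)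
    (h3 : dot3 F v = 0) : dot3 (cross a b) v = 0 := by
  obtain ⟨l, hl⟩ := line_unique (cross_ne_zero ha hb hab) h1 h2
  have hlne : l ≠ 0 := by
    rintro rfl; rw [zero_smul] at hl; exact hF hl
  rw [hl, dot3_smul_left] at h3
  exact (mul_eq_zero.mp h3).resolve_left hlne

def map6 (σ : K ≃ₐ[k] K) (c : Fin 6 → K) : Fin 6 → K := fun m => σ (c m)

lemma conicFun_map6 (σ : K ≃ₐ[k] K) (v : Fin 3 → K) (c : Fin 6 → K) :
    conicFun (mapv σ v) (map6 σ c) = σ (conicFun v c) := by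
  simp [conicFun_apply, mapv, map6, map_add, map_mul, map_pow]

lemma map6_ne_zero (σ : K ≃ₐ[k] K) {c : Fin 6 → K} (h : c ≠ 0) : map6 σ c ≠ 0 := by
  intro h0
  apply h
  funext m
  have := congrFun h0 m
  simp only [map6, Pi.zero_apply] at this ⊢
  exact (map_eq_zero_iff σ σ.injective).mp this

lemma iota_inj (a1 a2 a3 : Fin 5) (h12 : a1 ≠ a2) (h13 : a1 ≠ a3) (h23 : a2 ≠ a3) :
    ∀ x y : Fin 5, x ≠ y →
      (![Sum.inl a1, Sum.inl a2, Sum.inl a3, Sum.inr 0, Sum.inr 1] :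
        Fin 5 → Fin 5 ⊕ Fin 2) x ≠
      (![Sum.inl a1, Sum.inl a2, Sum.inl a3, Sum.inr 0, Sum.inr 1] :
        Fin 5 → Fin 5 ⊕ Fin 2) y := by
  intro x y hxy
  have h21 := Ne.symm h12
  have h31 := Ne.symm h13
  have h32 := Ne.symm h23
  fin_cases x <;> fin_cases y <;> simp_all

end Main

end Stmt11Aux

open Stmt11Aux in
/-- Let `k` be a perfect field, `p₁, …, p₅` a Galois orbit of size 5 in `ℙ²` over the
algebraic closure with not all five points collinear, and `q₁, q₂` a Galois orbit of
size 2.  Then either all seven points lie on a common conic, or the seven points are in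
general position (no three collinear and no six on a conic). -/
theorem stmt11 (k : Type*) [Field k] [PerfectField k]
    (p : Fin 5 → (Fin 3 → AlgebraicClosure k)) (q : Fin 2 → (Fin 3 → AlgebraicClosure k))
    (hpne : ∀ i, p i ≠ 0)
    (hpdist : ∀ i j, i ≠ j → ¬ ProjEq3 (p i) (p j))
    (hpstab : ∀ σ : AlgebraicClosure k ≃ₐ[k] AlgebraicClosure k,
      ∃ π : Equiv.Perm (Fin 5), ∀ i, ProjEq3 (fun m => σ (p i m)) (p (π i)))
    (hptrans : ∀ i j, ∃ σ : AlgebraicClosure k ≃ₐ[k] AlgebraicClosure k,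
      ProjEq3 (fun m => σ (p i m)) (p j))
    (hpnotall : ¬ ∃ f : (Fin 3 → AlgebraicClosure k) →ₗ[AlgebraicClosure k] AlgebraicClosure k,
      f ≠ 0 ∧ ∀ i, f (p i) = 0)
    (hqne : ∀ i, q i ≠ 0)
    (hqdist : ∀ i j, i ≠ j → ¬ ProjEq3 (q i) (q j))
    (hqstab : ∀ σ : AlgebraicClosure k ≃ₐ[k] AlgebraicClosure k,
      ∃ ρ : Equiv.Perm (Fin 2), ∀ i, ProjEq3 (fun m => σ (q i m)) (q (ρ i)))
    (hqtrans : ∀ i j, ∃ σ : AlgebraicClosure k ≃ₐ[k] AlgebraicClosure k,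
      ProjEq3 (fun m => σ (q i m)) (q j)) :
    (∃ c : Fin 6 → AlgebraicClosure k, c ≠ 0 ∧ ∀ i, OnConic c (Sum.elim p q i)) ∨
      ((∀ i j l : Fin 5 ⊕ Fin 2, i ≠ j → i ≠ l → j ≠ l →
          ¬ Collinear3 (Sum.elim p q i) (Sum.elim p q j) (Sum.elim p q l)) ∧
        (∀ i₀ : Fin 5 ⊕ Fin 2, ¬ ∃ c : Fin 6 → AlgebraicClosure k, c ≠ 0 ∧
          ∀ i, i ≠ i₀ → OnConic c (Sum.elim p q i))) := by
  classical
  have hstab : ∀ σ : AlgebraicClosure k ≃ₐ[k] AlgebraicClosure k,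
      ∃ (π : Equiv.Perm (Fin 5)) (ρ : Equiv.Perm (Fin 2)),
        (∀ i, ProjEq3 (mapv σ (p i)) (p (π i))) ∧ (∀ a, ProjEq3 (mapv σ (q a)) (q (ρ a))) := by
    intro σ
    obtain ⟨π, hπ⟩ := hpstab σ
    obtain ⟨ρ, hρ⟩ := hqstab σ
    exact ⟨π, ρ, hπ, hρ⟩
  have hpnotall' : ¬ ∃ F : Fin 3 → AlgebraicClosure k, F ≠ 0 ∧ ∀ i, dot3 F (p i) = 0 := by
    rintro ⟨F, hF, hall⟩
    exact hpnotall ⟨dotMap F, dotMap_ne_zero hF, fun i => by rw [dotMap_apply]; exact hall i⟩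
  have hA := no_three_p_collinear p hpne hpdist hpstab hptrans hpnotall'
  have hpq := p_ne_q p q hpdist hptrans hqstab
  have hB := no_qq_p_collinear p q hpdist hptrans hpnotall' hqne hqdist hstab
  have hC := no_pp_q_collinear p q hpne hpdist hptrans hqne hstab hA hpq
  have hdist7 : ∀ x y : Fin 5 ⊕ Fin 2, x ≠ y →
      ¬ ProjEq3 (Sum.elim p q x) (Sum.elim p q y) := by
    rintro (i | a) (j | b) hxy
    · exact hpdist i j (fun h => hxy (congrArg Sum.inl h))
    · exact hpq i b
    · exact fun h => hpq j a (projEq3_symm h)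
    · exact hqdist a b (fun h => hxy (congrArg Sum.inr h))
  have hne7 : ∀ x : Fin 5 ⊕ Fin 2, Sum.elim p q x ≠ 0 := by
    rintro (i | a)
    · exact hpne i
    · exact hqne a
  have noThreeDot : ∀ x y z : Fin 5 ⊕ Fin 2, x ≠ y → x ≠ z → y ≠ z →
      ¬ ∃ F : Fin 3 → AlgebraicClosure k, F ≠ 0 ∧ dot3 F (Sum.elim p q x) = 0 ∧
        dot3 F (Sum.elim p q y) = 0 ∧ dot3 F (Sum.elim p q z) = 0 := by
    rintro (i | a) (j | b) (l | c) hxy hxz hyz ⟨F, hF, h1, h2, h3⟩ <;>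
      simp only [Sum.elim_inl, Sum.elim_inr] at h1 h2 h3
    · have hij : i ≠ j := fun h => hxy (congrArg Sum.inl h)
      have hil : i ≠ l := fun h => hxz (congrArg Sum.inl h)
      have hjl : j ≠ l := fun h => hyz (congrArg Sum.inl h)
      exact hA i j l hij hil hjl (collinear_to_onL (hpne i) (hpne j) (hpdist i j hij) hF h1 h2 h3)
    · have hij : i ≠ j := fun h => hxy (congrArg Sum.inl h)
      exact hC i j c hij (collinear_to_onL (hpne i) (hpne j) (hpdist i j hij) hF h1 h2 h3)
    · have hil : i ≠ l := fun h => hxz (congrArg Sum.inl h)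
      exact hC i l b hil (collinear_to_onL (hpne i) (hpne l) (hpdist i l hil) hF h1 h3 h2)
    · have hbc : b ≠ c := fun h => hyz (congrArg Sum.inr h)
      exact hB b c i hbc (collinear_to_onL (hqne b) (hqne c) (hqdist b c hbc) hF h2 h3 h1)
    · have hjl : j ≠ l := fun h => hyz (congrArg Sum.inl h)
      exact hC j l a hjl (collinear_to_onL (hpne j) (hpne l) (hpdist j l hjl) hF h2 h3 h1)
    · have hac : a ≠ c := fun h => hxz (congrArg Sum.inr h)
      exact hB a c j hac (collinear_to_onL (hqne a) (hqne c) (hqdist a c hac) hF h1 h3 h2)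
    · have hab : a ≠ b := fun h => hxy (congrArg Sum.inr h)
      exact hB a b l hab (collinear_to_onL (hqne a) (hqne b) (hqdist a b hab) hF h1 h2 h3)
    · have hab : a ≠ b := fun h => hxy (congrArg Sum.inr h)
      have hac : a ≠ c := fun h => hxz (congrArg Sum.inr h)
      have hbc : b ≠ c := fun h => hyz (congrArg Sum.inr h)
      exact (by decide : ∀ x y z : Fin 2, x ≠ y → x ≠ z → y ≠ z → False) a b c hab hac hbc
  by_cases hex : ∃ i₀ : Fin 5 ⊕ Fin 2, ∃ c : Fin 6 → AlgebraicClosure k, c ≠ 0 ∧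
      ∀ i, i ≠ i₀ → OnConic c (Sum.elim p q i)
  · left
    obtain ⟨i₀, C, hC0, hCall⟩ := hex
    have hCall' : ∀ i, i ≠ i₀ → conicFun (Sum.elim p q i) C = 0 := fun i hi =>
      (onConic_iff C _).mp (hCall i hi)
    rcases i₀ with j | b
    · -- the six points are the p i for i ≠ j, together with both points of the 2-orbit
      obtain ⟨l0, hl0⟩ : ∃ l : Fin 5, l ≠ j := by
        rcases eq_or_ne j 0 with rfl | hne
        · exact ⟨1, by decide⟩
        · exact ⟨0, Ne.symm hne⟩
      obtain ⟨σ, hσ⟩ := hptrans l0 j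
      obtain ⟨π, ρ, hπ, hρ⟩ := hstab σ
      have hπl : π l0 = j := projEq3_target p hpdist (hπ l0) hσ
      set C' := map6 σ C with hC'def
      have hC'0 : C' ≠ 0 := map6_ne_zero σ hC0
      have hC'p : ∀ i, i ≠ j → conicFun (p (π i)) C' = 0 := by
        intro i hij
        apply conicFun_projEq (hπ i)
        rw [hC'def, conicFun_map6]
        have h' := hCall' (Sum.inl i) (fun h => hij (Sum.inl.inj h))
        simp only [Sum.elim_inl] at h'
        rw [h', map_zero]
      have hC'q : ∀ a, conicFun (q a) C' = 0 := by
        intro a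
        have h1 : conicFun (q (ρ (ρ.symm a))) C' = 0 := by
          apply conicFun_projEq (hρ (ρ.symm a))
          rw [hC'def, conicFun_map6]
          have h' := hCall' (Sum.inr (ρ.symm a)) (by simp)
          simp only [Sum.elim_inr] at h'
          rw [h', map_zero]
        rwa [Equiv.apply_symm_apply] at h1
      have hπj : π j ≠ j := by
        intro h
        exact hl0 (π.injective (hπl.trans h.symm))
      set s : Finset (Fin 5) := (Finset.univ.erase j).erase (π j) with hs
      have hscard : 3 ≤ s.card := by
        rw [hs, Finset.card_erase_of_mem (Finset.mem_erase.mpr ⟨hπj, Finset.mem_univ _⟩),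
          Finset.card_erase_of_mem (Finset.mem_univ _)]
        simp [Finset.card_univ]
      obtain ⟨a1, ha1⟩ : s.Nonempty := Finset.card_pos.mp (by omega)
      have h2card : 2 ≤ (s.erase a1).card := by
        rw [Finset.card_erase_of_mem ha1]; omega
      obtain ⟨a2, ha2⟩ : (s.erase a1).Nonempty := Finset.card_pos.mp (by omega)
      have h3card : 1 ≤ ((s.erase a1).erase a2).card := by
        rw [Finset.card_erase_of_mem ha2]; omega
      obtain ⟨a3, ha3⟩ : ((s.erase a1).erase a2).Nonempty := Finset.card_pos.mp (by omega)
      have ha2' : a2 ∈ s := Finset.mem_of_mem_erase ha2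
      have ha3' : a3 ∈ s := Finset.mem_of_mem_erase (Finset.mem_of_mem_erase ha3)
      have h12 : a1 ≠ a2 := fun h => (Finset.mem_erase.mp ha2).1 h.symm
      have h13 : a1 ≠ a3 := fun h => (Finset.mem_erase.mp (Finset.mem_of_mem_erase ha3)).1 h.symm
      have h23 : a2 ≠ a3 := fun h => (Finset.mem_erase.mp ha3).1 h.symm
      have hmem : ∀ x ∈ s, x ≠ j ∧ x ≠ π j := by
        intro x hx
        rw [hs, Finset.mem_erase, Finset.mem_erase] at hx
        exact ⟨hx.2.1, hx.1⟩
      obtain ⟨h1j, h1π⟩ := hmem a1 ha1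
      obtain ⟨h2j, h2π⟩ := hmem a2 ha2'
      obtain ⟨h3j, h3π⟩ := hmem a3 ha3'
      have hCp6 : ∀ y : Fin 5, y ≠ j → conicFun (p y) C = 0 := by
        intro y hy
        have h' := hCall' (Sum.inl y) (fun h => hy (Sum.inl.inj h))
        simpa using h'
      have hCq6 : ∀ a, conicFun (q a) C = 0 := by
        intro a
        have h' := hCall' (Sum.inr a) (by simp)
        simpa using h'
      have hkey : ∀ y : Fin 5, y ≠ π j → conicFun (p y) C' = 0 := by
        intro y hy
        have hyj : π.symm y ≠ j := by
          intro h
          exact hy ((Equiv.symm_apply_eq π).mp h)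
        have h' := hC'p (π.symm y) hyj
        rwa [π.apply_symm_apply] at h'
      have hCfive : ∀ x, conicFun (Sum.elim p q
          ((![Sum.inl a1, Sum.inl a2, Sum.inl a3, Sum.inr 0, Sum.inr 1] :
            Fin 5 → Fin 5 ⊕ Fin 2) x)) C = 0 := by
        intro x
        fin_cases x
        · exact hCp6 a1 h1j
        · exact hCp6 a2 h2j
        · exact hCp6 a3 h3j
        · exact hCq6 0
        · exact hCq6 1
      have hC'five : ∀ x, conicFun (Sum.elim p q
          ((![Sum.inl a1, Sum.inl a2, Sum.inl a3, Sum.inr 0, Sum.inr 1] :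
            Fin 5 → Fin 5 ⊕ Fin 2) x)) C' = 0 := by
        intro x
        fin_cases x
        · exact hkey a1 h1π
        · exact hkey a2 h2π
        · exact hkey a3 h3π
        · exact hC'q 0
        · exact hC'q 1
      obtain ⟨lc, hlc⟩ := conic_unique (fun x => Sum.elim p q
          ((![Sum.inl a1, Sum.inl a2, Sum.inl a3, Sum.inr 0, Sum.inr 1] :
            Fin 5 → Fin 5 ⊕ Fin 2) x))
        (fun x => hne7 _)
        (fun x y hxy => hdist7 _ _ (iota_inj a1 a2 a3 h12 h13 h23 x y hxy))
        (fun x y z hh1 hh2 hh3 =>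
          noThreeDot _ _ _ (iota_inj a1 a2 a3 h12 h13 h23 x y hh1)
            (iota_inj a1 a2 a3 h12 h13 h23 x z hh2)
            (iota_inj a1 a2 a3 h12 h13 h23 y z hh3))
        C C' hC0 hCfive hC'five
      have hlcne : lc ≠ 0 := by
        rintro rfl; rw [zero_smul] at hlc; exact hC'0 hlc
      have hpjC : conicFun (p j) C = 0 := by
        have h' := hC'p l0 hl0
        rw [hπl, hlc, map_smul, smul_eq_mul] at h'
        exact (mul_eq_zero.mp h').resolve_left hlcne
      refine ⟨C, hC0, ?_⟩
      rintro (i | a)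
      · rcases eq_or_ne i j with rfl | hij
        · exact (onConic_iff C _).mpr hpjC
        · exact hCall _ (fun h => hij (Sum.inl.inj h))
      · exact hCall _ (by simp)
    · -- the six points are all the p's together with the other point of the 2-orbit
      obtain ⟨a, hab⟩ : ∃ a : Fin 2, a ≠ b := by
        rcases eq_or_ne b 0 with rfl | hne
        · exact ⟨1, by decide⟩
        · exact ⟨0, Ne.symm hne⟩
      obtain ⟨σ, hσ⟩ := hqtrans a b
      obtain ⟨π, ρ, hπ, hρ⟩ := hstab σ
      set C' := map6 σ C with hC'def
      have hC'0 : C' ≠ 0 := map6_ne_zero σ hC0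
      have hC'p : ∀ i, conicFun (p i) C' = 0 := by
        intro i
        have h' : conicFun (p (π (π.symm i))) C' = 0 := by
          apply conicFun_projEq (hπ (π.symm i))
          rw [hC'def, conicFun_map6]
          have h'' := hCall' (Sum.inl (π.symm i)) (by simp)
          simp only [Sum.elim_inl] at h''
          rw [h'', map_zero]
        rwa [Equiv.apply_symm_apply] at h'
      have hC'qb : conicFun (q b) C' = 0 := by
        apply conicFun_projEq hσ
        show conicFun (mapv σ (q a)) C' = 0
        rw [hC'def, conicFun_map6]
        have h'' := hCall' (Sum.inr a) (fun h => hab (Sum.inr.inj h))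
        simp only [Sum.elim_inr] at h''
        rw [h'', map_zero]
      obtain ⟨lc, hlc⟩ := conic_unique p hpne hpdist
        (fun i j l hh1 hh2 hh3 =>
          noThreeDot (Sum.inl i) (Sum.inl j) (Sum.inl l)
            (fun h => hh1 (Sum.inl.inj h)) (fun h => hh2 (Sum.inl.inj h))
            (fun h => hh3 (Sum.inl.inj h)))
        C C' hC0
        (fun i => by
          have h'' := hCall' (Sum.inl i) (by simp)
          simpa using h'')
        hC'p
      have hlcne : lc ≠ 0 := by
        rintro rfl; rw [zero_smul] at hlc; exact hC'0 hlc
      have hqbC : conicFun (q b) C = 0 := by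
        rw [hlc, map_smul, smul_eq_mul] at hC'qb
        exact (mul_eq_zero.mp hC'qb).resolve_left hlcne
      refine ⟨C, hC0, ?_⟩
      rintro (i | c)
      · exact hCall _ (by simp)
      · rcases eq_or_ne c b with rfl | hcb
        · exact (onConic_iff C _).mpr hqbC
        · exact hCall _ (fun h => hcb (Sum.inr.inj h))
  · right
    constructor
    · intro i j l hij hil hjl hcol
      obtain ⟨F, hF, h1, h2, h3⟩ := collinear3_iff.mp hcol
      exact noThreeDot i j l hij hil hjl ⟨F, hF, h1, h2, h3⟩
    · intro i₀ h
      exact hex ⟨i₀, h⟩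
end

section
/- Let Frob~ be the self-map of P^1 × P^1 over the algebraic closure of F_2 defined by ([x_0:x_1],[y_0:y_1]) ↦ ([y_0^2:y_1^2],[x_0^2:x_1^2]). If a point p with orbit of size d ≥ 3 under Frob~ has first coordinate [1:0], then two distinct points of the orbit of p lie on the curve x_1 = 0; in particular the orbit is not in general position on P^1 × P^1. Moreover, if d is odd and p = ([x:1],[y:1]) is fixed by Frob~^d, then y = x^{2^d} and x^{2^{2d}-1} = 1. -/
noncomputable section

/-- The algebraic closure of `𝔽₂`. -/
abbrev Kb := AlgebraicClosure (ZMod 2)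

/-- Projective equality of two vectors of `Kb²` (points of `ℙ¹`). -/
def ProjEq2 (a b : Kb × Kb) : Prop := ∃ c : Kb, c ≠ 0 ∧ (c * a.1, c * a.2) = b

/-- Equality of points of `ℙ¹ × ℙ¹` given by coordinate pairs. -/
def PointEq (a b : (Kb × Kb) × (Kb × Kb)) : Prop := ProjEq2 a.1 b.1 ∧ ProjEq2 a.2 b.2

/-- The twisted Frobenius `Frob~` of `ℙ¹ × ℙ¹`:
`([x₀:x₁],[y₀:y₁]) ↦ ([y₀²:y₁²],[x₀²:x₁²])`, on coordinate pairs. -/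
def frobT (p : (Kb × Kb) × (Kb × Kb)) : (Kb × Kb) × (Kb × Kb) :=
  ((p.2.1 ^ 2, p.2.2 ^ 2), (p.1.1 ^ 2, p.1.2 ^ 2))

lemma frob_two (p : (Kb × Kb) × (Kb × Kb)) :
    frobT^[2] p = ((p.1.1^4, p.1.2^4), (p.2.1^4, p.2.2^4)) := by
  simp only [Function.iterate_succ, Function.iterate_zero, Function.comp_apply, id_eq, frobT]
  refine Prod.ext (Prod.ext ?_ ?_) (Prod.ext ?_ ?_) <;> simp <;> ring

lemma frob_odd (n : ℕ) (x y : Kb) :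
    frobT^[2*n+1] ((x,1),(y,1)) = ((y^(2^(2*n+1)), 1), (x^(2^(2*n+1)), 1)) := by
  induction n with
  | zero => simp [frobT]
  | succ n ih =>
    have h1 : 2*(n+1)+1 = 2 + (2*n+1) := by ring
    have h2 : (2:ℕ)^(2+(2*n+1)) = 2^(2*n+1) * 4 := by
      rw [pow_add]; ring
    rw [h1, Function.iterate_add_apply, ih, frob_two, h2]
    simp [pow_mul]

lemma projeq_affine {a b : Kb} (h : ProjEq2 (a,1) (b,1)) : a = b := by
  obtain ⟨c, hc, h⟩ := h
  have h1 := congrArg Prod.fst h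
  have h2 := congrArg Prod.snd h
  simp at h1 h2
  subst h2; simpa using h1

/-- (1) If a point `p` of `ℙ¹ × ℙ¹` over the algebraic closure of `𝔽₂` whose `Frob~`-orbit
has size `d ≥ 3` has first coordinate `[1:0]`, then `p` and `Frob~²(p)` are two distinct
points of the orbit lying on the curve `x₁ = 0` (both have first coordinate `[1:0]`), so
the orbit is not in general position.
(2) Moreover, if `d` is odd and `p = ([x:1],[y:1])` (with `x, y ≠ 0`) is fixed by
`Frob~^d`, then `y = x^(2^d)` and `x^(2^(2d) - 1) = 1`. -/
theorem stmt18 :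
    (∀ d : ℕ, 3 ≤ d → ∀ p : (Kb × Kb) × (Kb × Kb),
      p.1 ≠ 0 → p.2 ≠ 0 →
      ProjEq2 p.1 (1, 0) →
      (∀ i j, i < d → j < d → i ≠ j → ¬ PointEq (frobT^[i] p) (frobT^[j] p)) →
      PointEq (frobT^[d] p) p →
      ¬ PointEq p (frobT^[2] p) ∧ ProjEq2 (frobT^[2] p).1 (1, 0)) ∧
    (∀ d : ℕ, Odd d → ∀ x y : Kb, x ≠ 0 → y ≠ 0 →
      PointEq (frobT^[d] ((x, 1), (y, 1))) ((x, 1), (y, 1)) →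
      y = x ^ (2 ^ d) ∧ x ^ (2 ^ (2 * d) - 1) = 1) := by
  constructor
  · intro d hd p hp1 hp2 hproj hgen _
    constructor
    · have := hgen 0 2 (by omega) (by omega) (by omega)
      simpa using this
    · obtain ⟨c, hc, h⟩ := hproj
      have h1 : c * p.1.1 = 1 := congrArg Prod.fst h
      have h2 : c * p.1.2 = 0 := congrArg Prod.snd h
      have hx0 : p.1.1 ≠ 0 := by
        intro h0; rw [h0, mul_zero] at h1; exact one_ne_zero h1.symm
      have hx1 : p.1.2 = 0 := by
        rcases mul_eq_zero.mp h2 with h' | h'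
        · exact absurd h' hc
        · exact h'
      rw [frob_two]
      refine ⟨(p.1.1 ^ 4)⁻¹, inv_ne_zero (pow_ne_zero 4 hx0), ?_⟩
      simp [hx1, inv_mul_cancel₀ (pow_ne_zero 4 hx0)]
  · intro d hd x y hx hy hfix
    obtain ⟨n, rfl⟩ := hd
    rw [frob_odd] at hfix
    obtain ⟨hf1, hf2⟩ := hfix
    have e1 : y ^ (2 ^ (2*n+1)) = x := projeq_affine hf1
    have e2 : x ^ (2 ^ (2*n+1)) = y := projeq_affine hf2
    refine ⟨e2.symm, ?_⟩
    have key : x ^ (2 ^ (2 * (2*n+1))) = x := by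
      have : (2:ℕ) ^ (2 * (2*n+1)) = 2 ^ (2*n+1) * 2 ^ (2*n+1) := by
        rw [two_mul, pow_add]
      rw [this, pow_mul, e2, e1]
    have hpos : 1 ≤ 2 ^ (2 * (2*n+1)) := Nat.one_le_two_pow
    have : x ^ (2 ^ (2 * (2*n+1)) - 1) * x = x := by
      rw [← pow_succ, Nat.sub_add_cancel hpos, key]
    have := mul_right_cancel₀ hx (this.trans (one_mul x).symm)
    exact this
  
end
end
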